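/- arXiv:math-ph/0510081 — 5 statements merged into one kernel-verified Lean document; each statement's English description precedes it below -/
import Mathlib

section
/- Let Ω ⊂ ℝ² be a bounded open set and let 𝒦(x,y) = x − y². Then there exist positive constants μ, δ, s, t and C such that, defining m(x,y) = (μ + δ)/2 where 𝒦(x,y) > 0 and m(x,y) = (μ − δ)/2 where 𝒦(x,y) ≤ 0, b(x,y) = m(x,y)𝒦(x,y) + s, c(y) = μy − t (with b > 0 and c < 0 on Ω), and defining for a smooth vector field Ψ = (Ψ₁, Ψ₂) the field w = MΨ = (bΨ₁ + cΨ₂, −𝒦cΨ₁ + bΨ₂) and the operator 𝓛*w = (𝒦 ∂_x w₁ + ∂_y w₂ + w₁, ∂_y w₁ − ∂_x w₂), the inequality ∫_Ω (Ψ₁ (𝓛*MΨ)₁ + Ψ₂ (𝓛*MΨ)₂) dx dy ≥ C ∫_Ω (|𝒦| Ψ₁² + Ψ₂²) dx dy holds for every smooth vector field Ψ with compact support in Ω. -/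
open MeasureTheory Real

/-- Partial derivative in the first variable. -/
noncomputable def pdx (u : ℝ × ℝ → ℝ) (p : ℝ × ℝ) : ℝ := deriv (fun t => u (t, p.2)) p.1

/-- Partial derivative in the second variable. -/
noncomputable def pdy (u : ℝ × ℝ → ℝ) (p : ℝ × ℝ) : ℝ := deriv (fun t => u (p.1, t)) p.2

/-- The type-change function 𝒦(x,y) = x - y². -/
noncomputable def Kcp (p : ℝ × ℝ) : ℝ := p.1 - p.2 ^ 2

/-- The piecewise constant m, the multiplier coefficient b = m𝒦 + s, and c = μy - t. -/
noncomputable def mCoeff (μ δ : ℝ) (p : ℝ × ℝ) : ℝ :=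
  if Kcp p > 0 then (μ + δ) / 2 else (μ - δ) / 2

noncomputable def bCoeff (μ δ s : ℝ) (p : ℝ × ℝ) : ℝ := mCoeff μ δ p * Kcp p + s

noncomputable def cCoeff (μ t : ℝ) (p : ℝ × ℝ) : ℝ := μ * p.2 - t

/-- The first component of w = MΨ. -/
noncomputable def Mw1 (μ δ s t : ℝ) (Ψ₁ Ψ₂ : ℝ × ℝ → ℝ) (p : ℝ × ℝ) : ℝ :=
  bCoeff μ δ s p * Ψ₁ p + cCoeff μ t p * Ψ₂ p

/-- The second component of w = MΨ. -/
noncomputable def Mw2 (μ δ s t : ℝ) (Ψ₁ Ψ₂ : ℝ × ℝ → ℝ) (p : ℝ × ℝ) : ℝ :=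
  -(Kcp p * cCoeff μ t p * Ψ₁ p) + bCoeff μ δ s p * Ψ₂ p

/-- The first component of 𝓛*w = (𝒦 ∂ₓw₁ + ∂_y w₂ + w₁, ∂_y w₁ - ∂ₓ w₂). -/
noncomputable def Lstar1 (w₁ w₂ : ℝ × ℝ → ℝ) (p : ℝ × ℝ) : ℝ :=
  Kcp p * pdx w₁ p + pdy w₂ p + w₁ p

/-- The second component of 𝓛*w. -/
noncomputable def Lstar2 (w₁ w₂ : ℝ × ℝ → ℝ) (p : ℝ × ℝ) : ℝ :=
  pdy w₁ p - pdx w₂ p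

/-! ### Auxiliary definitions for the proof -/

section Aux

open Set Filter Function

/-- The vector potential component `A` whose `x`-derivative appears in the divergence identity. -/
noncomputable def Afun (μ δ s t : ℝ) (Ψ₁ Ψ₂ : ℝ × ℝ → ℝ) (p : ℝ × ℝ) : ℝ :=
  Kcp p * bCoeff μ δ s p * Ψ₁ p ^ 2 / 2 + Kcp p * cCoeff μ t p * Ψ₁ p * Ψ₂ p
    - bCoeff μ δ s p * Ψ₂ p ^ 2 / 2

/-- The vector potential component `B` whose `y`-derivative appears in the divergence identity. -/
noncomputable def Bfun (μ δ s t : ℝ) (Ψ₁ Ψ₂ : ℝ × ℝ → ℝ) (p : ℝ × ℝ) : ℝ :=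
  -(Kcp p * cCoeff μ t p * Ψ₁ p ^ 2 / 2) + bCoeff μ δ s p * Ψ₁ p * Ψ₂ p
    + cCoeff μ t p * Ψ₂ p ^ 2 / 2

/-- Explicit formula for `∂ₓ A` away from the parabola. -/
noncomputable def GA (μ δ s t : ℝ) (Ψ₁ Ψ₂ : ℝ × ℝ → ℝ) (p : ℝ × ℝ) : ℝ :=
  (bCoeff μ δ s p + Kcp p * mCoeff μ δ p) * Ψ₁ p ^ 2 / 2
    + Kcp p * bCoeff μ δ s p * Ψ₁ p * pdx Ψ₁ p
    + cCoeff μ t p * Ψ₁ p * Ψ₂ p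
    + Kcp p * cCoeff μ t p * (pdx Ψ₁ p * Ψ₂ p + Ψ₁ p * pdx Ψ₂ p)
    - (mCoeff μ δ p * Ψ₂ p ^ 2 / 2 + bCoeff μ δ s p * Ψ₂ p * pdx Ψ₂ p)

/-- Explicit formula for `∂_y B` away from the parabola. -/
noncomputable def GB (μ δ s t : ℝ) (Ψ₁ Ψ₂ : ℝ × ℝ → ℝ) (p : ℝ × ℝ) : ℝ :=
  -((-(2 * p.2) * cCoeff μ t p + μ * Kcp p) * Ψ₁ p ^ 2 / 2
      + Kcp p * cCoeff μ t p * Ψ₁ p * pdy Ψ₁ p)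
    + (-(2 * p.2) * mCoeff μ δ p * Ψ₁ p * Ψ₂ p
      + bCoeff μ δ s p * (pdy Ψ₁ p * Ψ₂ p + Ψ₁ p * pdy Ψ₂ p))
    + (μ * Ψ₂ p ^ 2 / 2 + cCoeff μ t p * Ψ₂ p * pdy Ψ₂ p)

/-- The quadratic form `Q`. -/
noncomputable def Qf (μ δ s t : ℝ) (Ψ₁ Ψ₂ : ℝ × ℝ → ℝ) (p : ℝ × ℝ) : ℝ :=
  (mCoeff μ δ p * Kcp p - μ * Kcp p / 2 + s / 2 + p.2 * (μ * p.2 - t)) * Ψ₁ p ^ 2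
    + ((μ - 2 * mCoeff μ δ p) * p.2 - t) * Ψ₁ p * Ψ₂ p
    + ((μ - mCoeff μ δ p) / 2) * Ψ₂ p ^ 2

lemma Kcp_continuous : Continuous Kcp := by
  unfold Kcp; fun_prop

lemma cCoeff_continuous (μ t : ℝ) : Continuous (cCoeff μ t) := by
  unfold cCoeff; fun_prop

lemma mCoeff_mul_Kcp (μ δ : ℝ) (p : ℝ × ℝ) :
    mCoeff μ δ p * Kcp p = μ / 2 * Kcp p + δ / 2 * |Kcp p| := by
  unfold mCoeff
  by_cases h : Kcp p > 0
  · rw [if_pos h, abs_of_pos h]; ring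
  · rw [if_neg h, abs_of_nonpos (not_lt.1 h)]; ring

lemma bCoeff_continuous (μ δ s : ℝ) : Continuous (bCoeff μ δ s) := by
  have : bCoeff μ δ s = fun p => μ / 2 * Kcp p + δ / 2 * |Kcp p| + s := by
    funext p; rw [bCoeff, mCoeff_mul_Kcp]
  rw [this]
  exact (((continuous_const.mul Kcp_continuous).add
    (continuous_const.mul Kcp_continuous.abs)).add continuous_const)

lemma mCoeff_measurable (μ δ : ℝ) : Measurable (mCoeff μ δ) := by
  unfold mCoeff
  exact Measurable.ite (measurableSet_lt measurable_const Kcp_continuous.measurable)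
    measurable_const measurable_const

lemma mCoeff_abs_le (μ δ : ℝ) (p : ℝ × ℝ) : |mCoeff μ δ p| ≤ (|μ| + |δ|) / 2 := by
  unfold mCoeff
  split <;>
  · rw [abs_div, abs_two]
    gcongr
    first
      | exact (abs_add_le _ _)
      | exact (abs_sub _ _)

end Aux

section Derivs

open Set Filter Function

variable {μ δ s t : ℝ} {Ψ₁ Ψ₂ Ψ : ℝ × ℝ → ℝ}

lemma hasDerivAt_K_x (p : ℝ × ℝ) : HasDerivAt (fun u => Kcp (u, p.2)) 1 p.1 := by
  simpa [Kcp] using (hasDerivAt_id p.1).sub_const (p.2 ^ 2)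

lemma hasDerivAt_K_y (p : ℝ × ℝ) : HasDerivAt (fun v => Kcp (p.1, v)) (-(2 * p.2)) p.2 := by
  have h := (hasDerivAt_pow 2 p.2).const_sub p.1
  simpa [Kcp] using h

lemma hasDerivAt_c_x (p : ℝ × ℝ) : HasDerivAt (fun u => cCoeff μ t (u, p.2)) 0 p.1 := by
  simpa [cCoeff] using hasDerivAt_const p.1 (μ * p.2 - t)

lemma hasDerivAt_c_y (p : ℝ × ℝ) : HasDerivAt (fun v => cCoeff μ t (p.1, v)) μ p.2 := by
  have h := ((hasDerivAt_id p.2).const_mul μ).sub_const t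
  simpa [cCoeff] using h

lemma mCoeff_eventuallyEq {p : ℝ × ℝ} (hp : Kcp p ≠ 0) :
    ∀ᶠ q in nhds p, mCoeff μ δ q = mCoeff μ δ p := by
  rcases hp.lt_or_gt with h | h
  · have ho : IsOpen {q : ℝ × ℝ | Kcp q < 0} := isOpen_lt Kcp_continuous continuous_const
    filter_upwards [ho.mem_nhds h] with q hq
    simp only [mCoeff, if_neg (not_lt.2 (le_of_lt hq)), if_neg (not_lt.2 (le_of_lt h))]
  · have ho : IsOpen {q : ℝ × ℝ | 0 < Kcp q} := isOpen_lt continuous_const Kcp_continuous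
    filter_upwards [ho.mem_nhds h] with q hq
    simp only [mCoeff, if_pos hq, if_pos h]

lemma hasDerivAt_m_x {p : ℝ × ℝ} (hp : Kcp p ≠ 0) :
    HasDerivAt (fun u => mCoeff μ δ (u, p.2)) 0 p.1 := by
  have ht : Filter.Tendsto (fun u : ℝ => (u, p.2)) (nhds p.1) (nhds p) := by
    have := (continuous_id.prodMk (continuous_const (y := p.2))).tendsto p.1
    simpa using this
  have h : ∀ᶠ u in nhds p.1, mCoeff μ δ (u, p.2) = mCoeff μ δ p :=
    ht.eventually (mCoeff_eventuallyEq hp)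
  exact (hasDerivAt_const p.1 (mCoeff μ δ p)).congr_of_eventuallyEq
    (by filter_upwards [h] with u hu using hu)

lemma hasDerivAt_m_y {p : ℝ × ℝ} (hp : Kcp p ≠ 0) :
    HasDerivAt (fun v => mCoeff μ δ (p.1, v)) 0 p.2 := by
  have ht : Filter.Tendsto (fun v : ℝ => (p.1, v)) (nhds p.2) (nhds p) := by
    have := ((continuous_const (y := p.1)).prodMk continuous_id).tendsto p.2
    simpa using this
  have h : ∀ᶠ v in nhds p.2, mCoeff μ δ (p.1, v) = mCoeff μ δ p :=
    ht.eventually (mCoeff_eventuallyEq hp)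
  exact (hasDerivAt_const p.2 (mCoeff μ δ p)).congr_of_eventuallyEq
    (by filter_upwards [h] with v hv using hv)

lemma hasDerivAt_b_x {p : ℝ × ℝ} (hp : Kcp p ≠ 0) :
    HasDerivAt (fun u => bCoeff μ δ s (u, p.2)) (mCoeff μ δ p) p.1 := by
  have h := ((hasDerivAt_m_x (μ := μ) (δ := δ) hp).mul (hasDerivAt_K_x p)).add_const s
  have hm : (fun u => mCoeff μ δ (u, p.2)) p.1 = mCoeff μ δ p := by simp
  simp only [bCoeff]
  refine h.congr_deriv ?_
  simp [hm]

lemma hasDerivAt_b_y {p : ℝ × ℝ} (hp : Kcp p ≠ 0) :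
    HasDerivAt (fun v => bCoeff μ δ s (p.1, v)) (-(2 * p.2) * mCoeff μ δ p) p.2 := by
  have h := ((hasDerivAt_m_y (μ := μ) (δ := δ) hp).mul (hasDerivAt_K_y p)).add_const s
  simp only [bCoeff]
  refine h.congr_deriv ?_
  simp [mul_comm]

lemma hasDerivAt_slice_x (hΨ : ContDiff ℝ (⊤ : ℕ∞) Ψ) (p : ℝ × ℝ) :
    HasDerivAt (fun u => Ψ (u, p.2)) (pdx Ψ p) p.1 := by
  have hd : DifferentiableAt ℝ (fun u : ℝ => Ψ (u, p.2)) p.1 := by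
    apply DifferentiableAt.comp
    · exact (hΨ.differentiable (by simp)).differentiableAt
    · exact (differentiableAt_id.prodMk (differentiableAt_const _))
  simpa [pdx] using hd.hasDerivAt

lemma hasDerivAt_slice_y (hΨ : ContDiff ℝ (⊤ : ℕ∞) Ψ) (p : ℝ × ℝ) :
    HasDerivAt (fun v => Ψ (p.1, v)) (pdy Ψ p) p.2 := by
  have hd : DifferentiableAt ℝ (fun v : ℝ => Ψ (p.1, v)) p.2 := by
    apply DifferentiableAt.comp
    · exact (hΨ.differentiable (by simp)).differentiableAt
    · exact ((differentiableAt_const _).prodMk differentiableAt_id)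
  simpa [pdy] using hd.hasDerivAt

end Derivs

section Derivs2

open Set Filter Function

variable {μ δ s t : ℝ} {Ψ₁ Ψ₂ : ℝ × ℝ → ℝ}

lemma hasDerivAt_Mw1_x (h1 : ContDiff ℝ (⊤ : ℕ∞) Ψ₁) (h2 : ContDiff ℝ (⊤ : ℕ∞) Ψ₂) {p : ℝ × ℝ}
    (hp : Kcp p ≠ 0) :
    HasDerivAt (fun u => Mw1 μ δ s t Ψ₁ Ψ₂ (u, p.2))
      (mCoeff μ δ p * Ψ₁ p + bCoeff μ δ s p * pdx Ψ₁ p + cCoeff μ t p * pdx Ψ₂ p) p.1 := by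
  have h := ((hasDerivAt_b_x (μ := μ) (δ := δ) (s := s) hp).mul (hasDerivAt_slice_x h1 p)).add
    ((hasDerivAt_c_x (μ := μ) (t := t) p).mul (hasDerivAt_slice_x h2 p))
  simp only [Mw1]
  refine h.congr_deriv ?_
  simp; try ring

lemma hasDerivAt_Mw1_y (h1 : ContDiff ℝ (⊤ : ℕ∞) Ψ₁) (h2 : ContDiff ℝ (⊤ : ℕ∞) Ψ₂) {p : ℝ × ℝ}
    (hp : Kcp p ≠ 0) :
    HasDerivAt (fun v => Mw1 μ δ s t Ψ₁ Ψ₂ (p.1, v))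
      (-(2 * p.2) * mCoeff μ δ p * Ψ₁ p + bCoeff μ δ s p * pdy Ψ₁ p
        + μ * Ψ₂ p + cCoeff μ t p * pdy Ψ₂ p) p.2 := by
  have h := ((hasDerivAt_b_y (μ := μ) (δ := δ) (s := s) hp).mul (hasDerivAt_slice_y h1 p)).add
    ((hasDerivAt_c_y (μ := μ) (t := t) p).mul (hasDerivAt_slice_y h2 p))
  simp only [Mw1]
  refine h.congr_deriv ?_
  simp; try ring

lemma hasDerivAt_Mw2_x (h1 : ContDiff ℝ (⊤ : ℕ∞) Ψ₁) (h2 : ContDiff ℝ (⊤ : ℕ∞) Ψ₂) {p : ℝ × ℝ}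
    (hp : Kcp p ≠ 0) :
    HasDerivAt (fun u => Mw2 μ δ s t Ψ₁ Ψ₂ (u, p.2))
      (-(cCoeff μ t p * Ψ₁ p + Kcp p * cCoeff μ t p * pdx Ψ₁ p)
        + mCoeff μ δ p * Ψ₂ p + bCoeff μ δ s p * pdx Ψ₂ p) p.1 := by
  have h := ((((hasDerivAt_K_x p).mul (hasDerivAt_c_x (μ := μ) (t := t) p)).mul
      (hasDerivAt_slice_x h1 p)).neg).add
    ((hasDerivAt_b_x (μ := μ) (δ := δ) (s := s) hp).mul (hasDerivAt_slice_x h2 p))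
  simp only [Mw2]
  refine h.congr_deriv ?_
  simp; try ring

lemma hasDerivAt_Mw2_y (h1 : ContDiff ℝ (⊤ : ℕ∞) Ψ₁) (h2 : ContDiff ℝ (⊤ : ℕ∞) Ψ₂) {p : ℝ × ℝ}
    (hp : Kcp p ≠ 0) :
    HasDerivAt (fun v => Mw2 μ δ s t Ψ₁ Ψ₂ (p.1, v))
      (-(-(2 * p.2) * cCoeff μ t p * Ψ₁ p + Kcp p * μ * Ψ₁ p + Kcp p * cCoeff μ t p * pdy Ψ₁ p)
        + -(2 * p.2) * mCoeff μ δ p * Ψ₂ p + bCoeff μ δ s p * pdy Ψ₂ p) p.2 := by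
  have h := ((((hasDerivAt_K_y p).mul (hasDerivAt_c_y (μ := μ) (t := t) p)).mul
      (hasDerivAt_slice_y h1 p)).neg).add
    ((hasDerivAt_b_y (μ := μ) (δ := δ) (s := s) hp).mul (hasDerivAt_slice_y h2 p))
  simp only [Mw2]
  refine h.congr_deriv ?_
  simp; try ring

lemma hasDerivAt_Afun_x (h1 : ContDiff ℝ (⊤ : ℕ∞) Ψ₁) (h2 : ContDiff ℝ (⊤ : ℕ∞) Ψ₂) {p : ℝ × ℝ}
    (hp : Kcp p ≠ 0) :
    HasDerivAt (fun u => Afun μ δ s t Ψ₁ Ψ₂ (u, p.2)) (GA μ δ s t Ψ₁ Ψ₂ p) p.1 := by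
  have hK := hasDerivAt_K_x p
  have hb := hasDerivAt_b_x (μ := μ) (δ := δ) (s := s) hp
  have hc := hasDerivAt_c_x (μ := μ) (t := t) p
  have hs1 := hasDerivAt_slice_x h1 p
  have hs2 := hasDerivAt_slice_x h2 p
  have h := (((((hK.mul hb).mul (hs1.pow 2)).div_const 2).add
      ((((hK.mul hc).mul hs1).mul hs2))).sub
    (((hb.mul (hs2.pow 2)).div_const 2)))
  simp only [Afun]
  refine h.congr_deriv ?_
  simp [GA]; try ring

lemma hasDerivAt_Bfun_y (h1 : ContDiff ℝ (⊤ : ℕ∞) Ψ₁) (h2 : ContDiff ℝ (⊤ : ℕ∞) Ψ₂) {p : ℝ × ℝ}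
    (hp : Kcp p ≠ 0) :
    HasDerivAt (fun v => Bfun μ δ s t Ψ₁ Ψ₂ (p.1, v)) (GB μ δ s t Ψ₁ Ψ₂ p) p.2 := by
  have hK := hasDerivAt_K_y p
  have hb := hasDerivAt_b_y (μ := μ) (δ := δ) (s := s) hp
  have hc := hasDerivAt_c_y (μ := μ) (t := t) p
  have hs1 := hasDerivAt_slice_y h1 p
  have hs2 := hasDerivAt_slice_y h2 p
  have h := (((((hK.mul hc).mul (hs1.pow 2)).div_const 2).neg).add
      (((hb.mul hs1).mul hs2))).add
    (((hc.mul (hs2.pow 2)).div_const 2))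
  simp only [Bfun]
  refine h.congr_deriv ?_
  simp [GB]; try ring

end Derivs2

section Identity

variable {μ δ s t : ℝ} {Ψ₁ Ψ₂ : ℝ × ℝ → ℝ}

lemma key_identity (h1 : ContDiff ℝ (⊤ : ℕ∞) Ψ₁) (h2 : ContDiff ℝ (⊤ : ℕ∞) Ψ₂) {p : ℝ × ℝ}
    (hp : Kcp p ≠ 0) :
    Ψ₁ p * Lstar1 (Mw1 μ δ s t Ψ₁ Ψ₂) (Mw2 μ δ s t Ψ₁ Ψ₂) p +
      Ψ₂ p * Lstar2 (Mw1 μ δ s t Ψ₁ Ψ₂) (Mw2 μ δ s t Ψ₁ Ψ₂) p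
      = GA μ δ s t Ψ₁ Ψ₂ p + GB μ δ s t Ψ₁ Ψ₂ p + Qf μ δ s t Ψ₁ Ψ₂ p := by
  have e1 : pdx (Mw1 μ δ s t Ψ₁ Ψ₂) p
      = mCoeff μ δ p * Ψ₁ p + bCoeff μ δ s p * pdx Ψ₁ p + cCoeff μ t p * pdx Ψ₂ p :=
    (hasDerivAt_Mw1_x h1 h2 hp).deriv
  have e2 : pdy (Mw1 μ δ s t Ψ₁ Ψ₂) p
      = -(2 * p.2) * mCoeff μ δ p * Ψ₁ p + bCoeff μ δ s p * pdy Ψ₁ p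
        + μ * Ψ₂ p + cCoeff μ t p * pdy Ψ₂ p :=
    (hasDerivAt_Mw1_y h1 h2 hp).deriv
  have e3 : pdx (Mw2 μ δ s t Ψ₁ Ψ₂) p
      = -(cCoeff μ t p * Ψ₁ p + Kcp p * cCoeff μ t p * pdx Ψ₁ p)
        + mCoeff μ δ p * Ψ₂ p + bCoeff μ δ s p * pdx Ψ₂ p :=
    (hasDerivAt_Mw2_x h1 h2 hp).deriv
  have e4 : pdy (Mw2 μ δ s t Ψ₁ Ψ₂) p
      = -(-(2 * p.2) * cCoeff μ t p * Ψ₁ p + Kcp p * μ * Ψ₁ p + Kcp p * cCoeff μ t p * pdy Ψ₁ p)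
        + -(2 * p.2) * mCoeff μ δ p * Ψ₂ p + bCoeff μ δ s p * pdy Ψ₂ p :=
    (hasDerivAt_Mw2_y h1 h2 hp).deriv
  simp only [Lstar1, Lstar2]
  rw [e1, e2, e3, e4]
  simp only [Mw1, Mw2, GA, GB, Qf, bCoeff, cCoeff]
  ring

end Identity

section MeasureHelpers

open Set Filter Function MeasureTheory

lemma parabola_null : (volume : Measure (ℝ × ℝ)) {p : ℝ × ℝ | Kcp p = 0} = 0 := by
  have hmeas : MeasurableSet {p : ℝ × ℝ | Kcp p = 0} :=
    (isClosed_eq Kcp_continuous continuous_const).measurableSet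
  rw [MeasureTheory.Measure.volume_eq_prod, MeasureTheory.Measure.prod_apply hmeas]
  have : ∀ x : ℝ, (volume : Measure ℝ) {y : ℝ | Kcp (x, y) = 0} = 0 := by
    intro x
    refine measure_mono_null (t := {Real.sqrt x, -Real.sqrt x}) ?_
      (((Set.finite_singleton _).insert _).measure_zero _)
    intro y hy
    simp only [mem_setOf_eq, Kcp] at hy
    have hy2 : y ^ 2 = x := by linarith
    have heq : Real.sqrt (y ^ 2) = Real.sqrt x := by rw [hy2]
    rw [Real.sqrt_sq_eq_abs] at heq
    have hor : y = Real.sqrt x ∨ y = -Real.sqrt x := by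
      rcases abs_cases y with ⟨h, _⟩ | ⟨h, _⟩
      · left; linarith
      · right; linarith
    rcases hor with h | h <;> simp [h]
  simp [this]

lemma ae_Kcp_ne_zero : ∀ᵐ p : ℝ × ℝ, Kcp p ≠ 0 := by
  have := MeasureTheory.measure_eq_zero_iff_ae_notMem.mp parabola_null
  filter_upwards [this] with p hp
  exact hp

/-- FTC: the integral of the derivative of a compactly supported continuous function that is
differentiable off two points vanishes. -/
lemma integral_deriv_eq_zero_of_two_pts (g : ℝ → ℝ) (a b : ℝ) (hab : a ≤ b)
    (hg : Continuous g) (hgs : HasCompactSupport g)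
    (hdiff : ∀ z : ℝ, z ≠ a → z ≠ b → DifferentiableAt ℝ g z)
    (hint : Integrable (deriv g)) : ∫ z, deriv g z = 0 := by
  obtain ⟨r, hr⟩ := hgs.isBounded.subset_closedBall 0
  set M : ℝ := max r (max |a| |b|) + 1 with hM
  have hrM : r < M := by
    have : r ≤ max r (max |a| |b|) := le_max_left _ _
    linarith
  have haM : -M < a ∧ a < M := by
    have h1 : |a| ≤ max r (max |a| |b|) := le_trans (le_max_left _ _) (le_max_right _ _)
    constructor <;> [nlinarith [abs_nonneg a, neg_abs_le a, le_abs_self a];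
      nlinarith [neg_abs_le a, le_abs_self a]]
  have hbM : -M < b ∧ b < M := by
    have h1 : |b| ≤ max r (max |a| |b|) := le_trans (le_max_right _ _) (le_max_right _ _)
    constructor <;> [nlinarith [neg_abs_le b, le_abs_self b];
      nlinarith [neg_abs_le b, le_abs_self b]]
  have hzero : ∀ z : ℝ, M ≤ |z| → g z = 0 := by
    intro z hz
    apply image_eq_zero_of_notMem_tsupport
    intro hmem
    have := hr hmem
    rw [Metric.mem_closedBall, Real.dist_eq, sub_zero] at this
    linarith
  have hsub : support (deriv g) ⊆ Ioc (-M) M := by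
    intro z hz
    have hz' := support_deriv_subset hz
    have := hr hz'
    rw [Metric.mem_closedBall, Real.dist_eq, sub_zero] at this
    constructor
    · nlinarith [neg_abs_le z, le_abs_self z]
    · nlinarith [neg_abs_le z, le_abs_self z]
  rw [← intervalIntegral.integral_eq_integral_of_support_subset hsub]
  have hii : ∀ u v : ℝ, IntervalIntegrable (deriv g) volume u v := fun u v =>
    hint.intervalIntegrable
  have seg : ∀ u v : ℝ, u ≤ v → (∀ z ∈ Ioo u v, z ≠ a ∧ z ≠ b) →
      ∫ z in u..v, deriv g z = g v - g u := by
    intro u v huv hne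
    apply intervalIntegral.integral_eq_sub_of_hasDeriv_right_of_le huv hg.continuousOn
      (fun z hz => ((hdiff z (hne z hz).1 (hne z hz).2).hasDerivAt).hasDerivWithinAt)
      (hii u v)
  have h1 : ∫ z in (-M)..a, deriv g z = g a - g (-M) :=
    seg _ _ (by linarith [haM.1]) (fun z hz => ⟨ne_of_lt hz.2, by nlinarith [hz.2]⟩)
  have h2 : ∫ z in a..b, deriv g z = g b - g a :=
    seg _ _ hab (fun z hz => ⟨ne_of_gt hz.1, ne_of_lt hz.2⟩)
  have h3 : ∫ z in b..M, deriv g z = g M - g b :=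
    seg _ _ (by linarith [hbM.2]) (fun z hz => ⟨by nlinarith [hz.1], ne_of_gt hz.1⟩)
  have hsplit1 : ∫ z in a..M, deriv g z = (∫ z in a..b, deriv g z) + ∫ z in b..M, deriv g z :=
    (intervalIntegral.integral_add_adjacent_intervals (hii a b) (hii b M)).symm
  have hsplit : ∫ z in (-M)..M, deriv g z
      = (∫ z in (-M)..a, deriv g z) + ∫ z in a..M, deriv g z :=
    (intervalIntegral.integral_add_adjacent_intervals (hii (-M) a) (hii a M)).symm
  have hgM : g M = 0 := hzero M (by rw [abs_of_nonneg (by positivity : (0:ℝ) ≤ M)])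
  have hgM' : g (-M) = 0 := hzero (-M) (by rw [abs_neg, abs_of_nonneg (by positivity : (0:ℝ) ≤ M)])
  rw [hsplit, hsplit1, h1, h2, h3, hgM, hgM']
  ring

lemma slice_hcs_x {f : ℝ × ℝ → ℝ} (hf : HasCompactSupport f) (y : ℝ) :
    HasCompactSupport (fun x => f (x, y)) := by
  apply HasCompactSupport.intro (hf.image continuous_fst)
  intro x hx
  by_contra h
  exact hx ⟨(x, y), subset_tsupport f h, rfl⟩

lemma slice_hcs_y {f : ℝ × ℝ → ℝ} (hf : HasCompactSupport f) (x : ℝ) :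
    HasCompactSupport (fun y => f (x, y)) := by
  apply HasCompactSupport.intro (hf.image continuous_snd)
  intro y hy
  by_contra h
  exact hy ⟨(x, y), subset_tsupport f h, rfl⟩

end MeasureHelpers

section IntegrableHelpers

open Set Filter Function MeasureTheory

lemma pdx_eq_fderiv {Ψ : ℝ × ℝ → ℝ} (hΨ : ContDiff ℝ (⊤ : ℕ∞) Ψ) (p : ℝ × ℝ) :
    pdx Ψ p = fderiv ℝ Ψ p (1, 0) := by
  have hline : HasDerivAt (fun u : ℝ => (u, p.2)) ((1 : ℝ), (0 : ℝ)) p.1 :=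
    (hasDerivAt_id p.1).prodMk (hasDerivAt_const p.1 p.2)
  have h := ((hΨ.differentiable (by simp)) p).hasFDerivAt.comp_hasDerivAt p.1 hline
  exact h.deriv

lemma pdy_eq_fderiv {Ψ : ℝ × ℝ → ℝ} (hΨ : ContDiff ℝ (⊤ : ℕ∞) Ψ) (p : ℝ × ℝ) :
    pdy Ψ p = fderiv ℝ Ψ p (0, 1) := by
  have hline : HasDerivAt (fun v : ℝ => (p.1, v)) ((0 : ℝ), (1 : ℝ)) p.2 :=
    (hasDerivAt_const p.2 p.1).prodMk (hasDerivAt_id p.2)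
  have h := ((hΨ.differentiable (by simp)) p).hasFDerivAt.comp_hasDerivAt p.2 hline
  exact h.deriv

lemma pdx_continuous {Ψ : ℝ × ℝ → ℝ} (hΨ : ContDiff ℝ (⊤ : ℕ∞) Ψ) : Continuous (pdx Ψ) := by
  have : pdx Ψ = fun p => fderiv ℝ Ψ p (1, 0) := funext (pdx_eq_fderiv hΨ)
  rw [this]
  exact (hΨ.continuous_fderiv (by simp)).clm_apply continuous_const

lemma pdy_continuous {Ψ : ℝ × ℝ → ℝ} (hΨ : ContDiff ℝ (⊤ : ℕ∞) Ψ) : Continuous (pdy Ψ) := by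
  have : pdy Ψ = fun p => fderiv ℝ Ψ p (0, 1) := funext (pdy_eq_fderiv hΨ)
  rw [this]
  exact (hΨ.continuous_fderiv (by simp)).clm_apply continuous_const

lemma pdx_eq_zero_of_nmem {Ψ : ℝ × ℝ → ℝ} {p : ℝ × ℝ} (hp : p ∉ tsupport Ψ) :
    pdx Ψ p = 0 := by
  have ho : IsOpen (tsupport Ψ)ᶜ := isClosed_closure.isOpen_compl
  have ht : Filter.Tendsto (fun u : ℝ => (u, p.2)) (nhds p.1) (nhds p) := by
    have := (continuous_id.prodMk (continuous_const (y := p.2))).tendsto p.1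
    simpa using this
  have hev0 : ∀ᶠ q in nhds p, Ψ q = 0 := by
    filter_upwards [ho.mem_nhds hp] with q hq
    exact image_eq_zero_of_notMem_tsupport hq
  have hev : (fun u => Ψ (u, p.2)) =ᶠ[nhds p.1] (fun _ => (0 : ℝ)) := ht.eventually hev0
  rw [pdx, hev.deriv_eq, deriv_const]

lemma pdy_eq_zero_of_nmem {Ψ : ℝ × ℝ → ℝ} {p : ℝ × ℝ} (hp : p ∉ tsupport Ψ) :
    pdy Ψ p = 0 := by
  have ho : IsOpen (tsupport Ψ)ᶜ := isClosed_closure.isOpen_compl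
  have ht : Filter.Tendsto (fun v : ℝ => (p.1, v)) (nhds p.2) (nhds p) := by
    have := ((continuous_const (y := p.1)).prodMk continuous_id).tendsto p.2
    simpa using this
  have hev0 : ∀ᶠ q in nhds p, Ψ q = 0 := by
    filter_upwards [ho.mem_nhds hp] with q hq
    exact image_eq_zero_of_notMem_tsupport hq
  have hev : (fun v => Ψ (p.1, v)) =ᶠ[nhds p.2] (fun _ => (0 : ℝ)) := ht.eventually hev0
  rw [pdy, hev.deriv_eq, deriv_const]

/-- A function vanishing whenever both `Ψ₁` and `Ψ₂` vanish has compact support. -/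
lemma hcs_of_zero {Ψ₁ Ψ₂ f : ℝ × ℝ → ℝ} (hs1 : HasCompactSupport Ψ₁)
    (hs2 : HasCompactSupport Ψ₂) (h : ∀ p, Ψ₁ p = 0 → Ψ₂ p = 0 → f p = 0) :
    HasCompactSupport f := by
  apply HasCompactSupport.intro (hs1.union hs2)
  intro p hp
  simp only [Set.mem_union] at hp
  push_neg at hp
  exact h p (image_eq_zero_of_notMem_tsupport hp.1) (image_eq_zero_of_notMem_tsupport hp.2)

/-- `m·W + V` is integrable for continuous compactly supported `W`, `V`. -/
lemma integrable_m_decomp (μ δ : ℝ) {W V : ℝ × ℝ → ℝ} (hWc : Continuous W)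
    (hWs : HasCompactSupport W) (hVc : Continuous V) (hVs : HasCompactSupport V) :
    Integrable (fun p => mCoeff μ δ p * W p + V p) := by
  apply Integrable.add
  · have hWint : Integrable W := hWc.integrable_of_hasCompactSupport hWs
    apply Integrable.mono' (g := fun p => (|μ| + |δ|) / 2 * |W p|)
      (hWint.abs.const_mul _)
      (((mCoeff_measurable μ δ).mul hWc.measurable).aestronglyMeasurable)
    filter_upwards with p
    rw [Real.norm_eq_abs, Pi.mul_apply, abs_mul]
    exact mul_le_mul_of_nonneg_right (mCoeff_abs_le μ δ p) (abs_nonneg _)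
  · exact hVc.integrable_of_hasCompactSupport hVs

end IntegrableHelpers

section IntegralZero

open Set Filter Function MeasureTheory

variable {μ δ s t : ℝ} {Ψ₁ Ψ₂ : ℝ × ℝ → ℝ}

lemma Afun_continuous (h1 : ContDiff ℝ (⊤ : ℕ∞) Ψ₁) (h2 : ContDiff ℝ (⊤ : ℕ∞) Ψ₂) :
    Continuous (Afun μ δ s t Ψ₁ Ψ₂) := by
  unfold Afun
  exact (((Kcp_continuous.mul (bCoeff_continuous μ δ s)).mul (h1.continuous.pow 2)).div_const 2
    |>.add (((Kcp_continuous.mul (cCoeff_continuous μ t)).mul h1.continuous).mul h2.continuous)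
    |>.sub (((bCoeff_continuous μ δ s).mul (h2.continuous.pow 2)).div_const 2))

lemma Bfun_continuous (h1 : ContDiff ℝ (⊤ : ℕ∞) Ψ₁) (h2 : ContDiff ℝ (⊤ : ℕ∞) Ψ₂) :
    Continuous (Bfun μ δ s t Ψ₁ Ψ₂) := by
  unfold Bfun
  exact ((((Kcp_continuous.mul (cCoeff_continuous μ t)).mul (h1.continuous.pow 2)).div_const
      2).neg
    |>.add (((bCoeff_continuous μ δ s).mul h1.continuous).mul h2.continuous)
    |>.add (((cCoeff_continuous μ t).mul (h2.continuous.pow 2)).div_const 2))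

lemma Afun_hcs (hs1 : HasCompactSupport Ψ₁) (hs2 : HasCompactSupport Ψ₂) :
    HasCompactSupport (Afun μ δ s t Ψ₁ Ψ₂) :=
  hcs_of_zero hs1 hs2 (fun p e1 e2 => by simp [Afun, e1, e2])

lemma Bfun_hcs (hs1 : HasCompactSupport Ψ₁) (hs2 : HasCompactSupport Ψ₂) :
    HasCompactSupport (Bfun μ δ s t Ψ₁ Ψ₂) :=
  hcs_of_zero hs1 hs2 (fun p e1 e2 => by simp [Bfun, e1, e2])

lemma integrable_GA (h1 : ContDiff ℝ (⊤ : ℕ∞) Ψ₁) (h2 : ContDiff ℝ (⊤ : ℕ∞) Ψ₂)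
    (hs1 : HasCompactSupport Ψ₁) (hs2 : HasCompactSupport Ψ₂) :
    Integrable (GA μ δ s t Ψ₁ Ψ₂) := by
  have hdecomp : GA μ δ s t Ψ₁ Ψ₂ = fun p =>
      mCoeff μ δ p * (Kcp p * Ψ₁ p ^ 2 / 2 - Ψ₂ p ^ 2 / 2)
      + (bCoeff μ δ s p * Ψ₁ p ^ 2 / 2 + Kcp p * bCoeff μ δ s p * Ψ₁ p * pdx Ψ₁ p
        + cCoeff μ t p * Ψ₁ p * Ψ₂ p
        + Kcp p * cCoeff μ t p * (pdx Ψ₁ p * Ψ₂ p + Ψ₁ p * pdx Ψ₂ p)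
        - bCoeff μ δ s p * Ψ₂ p * pdx Ψ₂ p) := by
    funext p; simp only [GA]; ring
  rw [hdecomp]
  apply integrable_m_decomp
  · exact ((Kcp_continuous.mul (h1.continuous.pow 2)).div_const 2).sub
      ((h2.continuous.pow 2).div_const 2)
  · exact hcs_of_zero hs1 hs2 (fun p e1 e2 => by simp [e1, e2])
  · exact ((((bCoeff_continuous μ δ s).mul (h1.continuous.pow 2)).div_const 2
      |>.add (((Kcp_continuous.mul (bCoeff_continuous μ δ s)).mul h1.continuous).mul
        (pdx_continuous h1))
      |>.add (((cCoeff_continuous μ t).mul h1.continuous).mul h2.continuous)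
      |>.add ((Kcp_continuous.mul (cCoeff_continuous μ t)).mul
        (((pdx_continuous h1).mul h2.continuous).add (h1.continuous.mul (pdx_continuous h2))))
      |>.sub (((bCoeff_continuous μ δ s).mul h2.continuous).mul (pdx_continuous h2))))
  · exact hcs_of_zero hs1 hs2 (fun p e1 e2 => by simp [e1, e2])

lemma integrable_GB (h1 : ContDiff ℝ (⊤ : ℕ∞) Ψ₁) (h2 : ContDiff ℝ (⊤ : ℕ∞) Ψ₂)
    (hs1 : HasCompactSupport Ψ₁) (hs2 : HasCompactSupport Ψ₂) :
    Integrable (GB μ δ s t Ψ₁ Ψ₂) := by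
  have hdecomp : GB μ δ s t Ψ₁ Ψ₂ = fun p =>
      mCoeff μ δ p * (-(2 * p.2) * Ψ₁ p * Ψ₂ p)
      + (-((-(2 * p.2) * cCoeff μ t p + μ * Kcp p) * Ψ₁ p ^ 2 / 2
          + Kcp p * cCoeff μ t p * Ψ₁ p * pdy Ψ₁ p)
        + bCoeff μ δ s p * (pdy Ψ₁ p * Ψ₂ p + Ψ₁ p * pdy Ψ₂ p)
        + (μ * Ψ₂ p ^ 2 / 2 + cCoeff μ t p * Ψ₂ p * pdy Ψ₂ p)) := by
    funext p; simp only [GB]; ring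
  rw [hdecomp]
  apply integrable_m_decomp
  · exact (((continuous_const.mul continuous_snd).neg.mul h1.continuous).mul h2.continuous)
  · exact hcs_of_zero hs1 hs2 (fun p e1 e2 => by simp [e1, e2])
  · exact (((((continuous_const.mul continuous_snd).neg.mul (cCoeff_continuous μ t)).add
        (continuous_const.mul Kcp_continuous)).mul (h1.continuous.pow 2)).div_const 2
      |>.add (((Kcp_continuous.mul (cCoeff_continuous μ t)).mul h1.continuous).mul
        (pdy_continuous h1))
      |>.neg
      |>.add ((bCoeff_continuous μ δ s).mul
        (((pdy_continuous h1).mul h2.continuous).add (h1.continuous.mul (pdy_continuous h2))))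
      |>.add (((continuous_const.mul (h2.continuous.pow 2)).div_const 2).add
        (((cCoeff_continuous μ t).mul h2.continuous).mul (pdy_continuous h2))))
  · exact hcs_of_zero hs1 hs2 (fun p e1 e2 => by simp [e1, e2])

lemma integrable_Qf (h1 : ContDiff ℝ (⊤ : ℕ∞) Ψ₁) (h2 : ContDiff ℝ (⊤ : ℕ∞) Ψ₂)
    (hs1 : HasCompactSupport Ψ₁) (hs2 : HasCompactSupport Ψ₂) :
    Integrable (Qf μ δ s t Ψ₁ Ψ₂) := by
  have hdecomp : Qf μ δ s t Ψ₁ Ψ₂ = fun p =>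
      mCoeff μ δ p * (Kcp p * Ψ₁ p ^ 2 - 2 * p.2 * Ψ₁ p * Ψ₂ p - Ψ₂ p ^ 2 / 2)
      + ((-(μ * Kcp p) / 2 + s / 2 + p.2 * (μ * p.2 - t)) * Ψ₁ p ^ 2
        + (μ * p.2 - t) * Ψ₁ p * Ψ₂ p + μ / 2 * Ψ₂ p ^ 2) := by
    funext p; simp only [Qf]; ring
  rw [hdecomp]
  apply integrable_m_decomp
  · exact ((Kcp_continuous.mul (h1.continuous.pow 2)).sub
      (((continuous_const.mul continuous_snd).mul h1.continuous).mul h2.continuous)).sub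
      ((h2.continuous.pow 2).div_const 2)
  · exact hcs_of_zero hs1 hs2 (fun p e1 e2 => by simp [e1, e2])
  · exact (((((continuous_const.mul Kcp_continuous).neg.div_const 2).add
        continuous_const).add (continuous_snd.mul
          ((continuous_const.mul continuous_snd).sub continuous_const))).mul
        (h1.continuous.pow 2)
      |>.add ((((continuous_const.mul continuous_snd).sub continuous_const).mul
        h1.continuous).mul h2.continuous)
      |>.add (continuous_const.mul (h2.continuous.pow 2)))
  · exact hcs_of_zero hs1 hs2 (fun p e1 e2 => by simp [e1, e2])

end IntegralZero

section DivergenceZero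

open Set Filter Function MeasureTheory

variable {μ δ s t : ℝ} {Ψ₁ Ψ₂ : ℝ × ℝ → ℝ}

lemma integral_GA_eq_zero (h1 : ContDiff ℝ (⊤ : ℕ∞) Ψ₁) (h2 : ContDiff ℝ (⊤ : ℕ∞) Ψ₂)
    (hs1 : HasCompactSupport Ψ₁) (hs2 : HasCompactSupport Ψ₂) :
    ∫ p : ℝ × ℝ, GA μ δ s t Ψ₁ Ψ₂ p = 0 := by
  have hIGA := integrable_GA (μ := μ) (δ := δ) (s := s) (t := t) h1 h2 hs1 hs2
  have haeq : GA μ δ s t Ψ₁ Ψ₂ =ᵐ[volume] pdx (Afun μ δ s t Ψ₁ Ψ₂) := by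
    filter_upwards [ae_Kcp_ne_zero] with p hp
    exact ((hasDerivAt_Afun_x h1 h2 hp).deriv).symm
  have hIpdx : Integrable (pdx (Afun μ δ s t Ψ₁ Ψ₂)) := hIGA.congr haeq
  rw [integral_congr_ae haeq]
  rw [MeasureTheory.Measure.volume_eq_prod] at hIpdx ⊢
  rw [MeasureTheory.integral_prod_symm _ hIpdx]
  have hslice := hIpdx.prod_left_ae
  have hzero : ∀ᵐ y : ℝ, (∫ x : ℝ, pdx (Afun μ δ s t Ψ₁ Ψ₂) (x, y)) = 0 := by
    filter_upwards [hslice] with y hy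
    have hcont : Continuous (fun x : ℝ => Afun μ δ s t Ψ₁ Ψ₂ (x, y)) :=
      (Afun_continuous h1 h2).comp (continuous_id.prodMk continuous_const)
    have hcs : HasCompactSupport (fun x : ℝ => Afun μ δ s t Ψ₁ Ψ₂ (x, y)) :=
      slice_hcs_x (Afun_hcs hs1 hs2) y
    have hdiff : ∀ z : ℝ, z ≠ y ^ 2 → z ≠ y ^ 2 →
        DifferentiableAt ℝ (fun x : ℝ => Afun μ δ s t Ψ₁ Ψ₂ (x, y)) z := by
      intro z hz _
      have hKz : Kcp (z, y) ≠ 0 := by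
        simp only [Kcp]
        exact sub_ne_zero_of_ne hz
      exact (hasDerivAt_Afun_x h1 h2 hKz).differentiableAt
    exact integral_deriv_eq_zero_of_two_pts (fun x : ℝ => Afun μ δ s t Ψ₁ Ψ₂ (x, y))
      (y ^ 2) (y ^ 2) le_rfl hcont hcs hdiff hy
  calc (∫ y : ℝ, ∫ x : ℝ, pdx (Afun μ δ s t Ψ₁ Ψ₂) (x, y))
      = ∫ y : ℝ, (0 : ℝ) := integral_congr_ae hzero
    _ = 0 := integral_zero _ _

lemma integral_GB_eq_zero (h1 : ContDiff ℝ (⊤ : ℕ∞) Ψ₁) (h2 : ContDiff ℝ (⊤ : ℕ∞) Ψ₂)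
    (hs1 : HasCompactSupport Ψ₁) (hs2 : HasCompactSupport Ψ₂) :
    ∫ p : ℝ × ℝ, GB μ δ s t Ψ₁ Ψ₂ p = 0 := by
  have hIGB := integrable_GB (μ := μ) (δ := δ) (s := s) (t := t) h1 h2 hs1 hs2
  have haeq : GB μ δ s t Ψ₁ Ψ₂ =ᵐ[volume] pdy (Bfun μ δ s t Ψ₁ Ψ₂) := by
    filter_upwards [ae_Kcp_ne_zero] with p hp
    exact ((hasDerivAt_Bfun_y h1 h2 hp).deriv).symm
  have hIpdy : Integrable (pdy (Bfun μ δ s t Ψ₁ Ψ₂)) := hIGB.congr haeq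
  rw [integral_congr_ae haeq]
  rw [MeasureTheory.Measure.volume_eq_prod] at hIpdy ⊢
  rw [MeasureTheory.integral_prod _ hIpdy]
  have hslice := hIpdy.prod_right_ae
  have hzero : ∀ᵐ x : ℝ, (∫ y : ℝ, pdy (Bfun μ δ s t Ψ₁ Ψ₂) (x, y)) = 0 := by
    filter_upwards [hslice] with x hx
    have hcont : Continuous (fun y : ℝ => Bfun μ δ s t Ψ₁ Ψ₂ (x, y)) :=
      (Bfun_continuous h1 h2).comp (continuous_const.prodMk continuous_id)
    have hcs : HasCompactSupport (fun y : ℝ => Bfun μ δ s t Ψ₁ Ψ₂ (x, y)) :=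
      slice_hcs_y (Bfun_hcs hs1 hs2) x
    have hdiff : ∀ z : ℝ, z ≠ -Real.sqrt x → z ≠ Real.sqrt x →
        DifferentiableAt ℝ (fun y : ℝ => Bfun μ δ s t Ψ₁ Ψ₂ (x, y)) z := by
      intro z hz1 hz2
      have hKz : Kcp (x, z) ≠ 0 := by
        simp only [Kcp]
        intro hcontra
        have hz2x : z ^ 2 = x := by linarith
        have heq : Real.sqrt (z ^ 2) = Real.sqrt x := by rw [hz2x]
        rw [Real.sqrt_sq_eq_abs] at heq
        rcases abs_cases z with ⟨h, _⟩ | ⟨h, _⟩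
        · exact hz2 (by linarith)
        · exact hz1 (by linarith)
      exact (hasDerivAt_Bfun_y h1 h2 hKz).differentiableAt
    exact integral_deriv_eq_zero_of_two_pts (fun y : ℝ => Bfun μ δ s t Ψ₁ Ψ₂ (x, y))
      (-Real.sqrt x) (Real.sqrt x)
      (by have := Real.sqrt_nonneg x; linarith) hcont hcs hdiff hx
  calc (∫ x : ℝ, ∫ y : ℝ, pdy (Bfun μ δ s t Ψ₁ Ψ₂) (x, y))
      = ∫ x : ℝ, (0 : ℝ) := integral_congr_ae hzero
    _ = 0 := integral_zero _ _

end DivergenceZero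

/-- The a priori estimate (Ψ, 𝓛*MΨ) ≥ C‖Ψ‖²_{𝓗_𝔎} of the proof of Theorem 2. -/
theorem mixed_problem_estimate (Ω : Set (ℝ × ℝ)) (hΩo : IsOpen Ω)
    (hΩb : Bornology.IsBounded Ω) :
    ∃ μ > (0 : ℝ), ∃ δ > (0 : ℝ), ∃ s > (0 : ℝ), ∃ t > (0 : ℝ), ∃ C > (0 : ℝ),
      (∀ p ∈ Ω, bCoeff μ δ s p > 0) ∧ (∀ p ∈ Ω, cCoeff μ t p < 0) ∧
      ∀ Ψ₁ Ψ₂ : ℝ × ℝ → ℝ, ContDiff ℝ (⊤ : ℕ∞) Ψ₁ → ContDiff ℝ (⊤ : ℕ∞) Ψ₂ →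
        HasCompactSupport Ψ₁ → HasCompactSupport Ψ₂ →
        tsupport Ψ₁ ⊆ Ω → tsupport Ψ₂ ⊆ Ω →
        (∫ p in Ω,
            (Ψ₁ p * Lstar1 (Mw1 μ δ s t Ψ₁ Ψ₂) (Mw2 μ δ s t Ψ₁ Ψ₂) p +
             Ψ₂ p * Lstar2 (Mw1 μ δ s t Ψ₁ Ψ₂) (Mw2 μ δ s t Ψ₁ Ψ₂) p)) ≥
          C * ∫ p in Ω, (|Kcp p| * (Ψ₁ p) ^ 2 + (Ψ₂ p) ^ 2) := by
  obtain ⟨R₀, hR₀⟩ := hΩb.subset_closedBall 0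
  set R : ℝ := max R₀ 0 with hRdef
  have hR0 : (0 : ℝ) ≤ R := le_max_right _ _
  have hmem : ∀ p ∈ Ω, |p.1| ≤ R ∧ |p.2| ≤ R := by
    intro p hp
    have hball : dist p 0 ≤ R₀ := hR₀ hp
    rw [dist_zero_right] at hball
    have h1 : ‖p.1‖ ≤ ‖p‖ := norm_fst_le p
    have h2 : ‖p.2‖ ≤ ‖p‖ := norm_snd_le p
    rw [Real.norm_eq_abs] at h1 h2
    exact ⟨le_trans h1 (le_trans hball (le_max_left _ _)),
      le_trans h2 (le_trans hball (le_max_left _ _))⟩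
  refine ⟨1, one_pos, 1/2, by norm_num,
    2 * (R + 1) * R + 8 * (R / 2 + (R + 1)) ^ 2 + 2,
    by nlinarith [sq_nonneg (R / 2 + (R + 1))], R + 1, by linarith, 1/16, by norm_num,
    ?_, ?_, ?_⟩
  · -- b > 0 on Ω
    intro p hp
    obtain ⟨hx, hy⟩ := hmem p hp
    have hx' := abs_le.1 hx
    have hy' := abs_le.1 hy
    have hKlb : -(R + R ^ 2) ≤ Kcp p := by
      unfold Kcp; nlinarith [sq_nonneg p.2]
    unfold bCoeff mCoeff
    split_ifs with hK
    · nlinarith [sq_nonneg (R / 2 + (R + 1))]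
    · push_neg at hK
      nlinarith [sq_nonneg (R / 2 + (R + 1)), sq_nonneg p.2]
  · -- c < 0 on Ω
    intro p hp
    have hy' := abs_le.1 (hmem p hp).2
    unfold cCoeff
    linarith
  · -- the main estimate
    intro Ψ₁ Ψ₂ h1 h2 hs1 hs2 ht1 ht2
    have hzero1 : ∀ p ∉ Ω, Ψ₁ p = 0 := fun p hp =>
      image_eq_zero_of_notMem_tsupport (fun hc => hp (ht1 hc))
    have hzero2 : ∀ p ∉ Ω, Ψ₂ p = 0 := fun p hp =>
      image_eq_zero_of_notMem_tsupport (fun hc => hp (ht2 hc))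
    rw [MeasureTheory.setIntegral_eq_integral_of_forall_compl_eq_zero
        (f := fun p => Ψ₁ p * Lstar1 _ _ p + Ψ₂ p * Lstar2 _ _ p)
        (fun p hp => by simp [hzero1 p hp, hzero2 p hp]),
      MeasureTheory.setIntegral_eq_integral_of_forall_compl_eq_zero
        (f := fun p => |Kcp p| * Ψ₁ p ^ 2 + Ψ₂ p ^ 2)
        (fun p hp => by simp [hzero1 p hp, hzero2 p hp])]
    set T : ℝ := R + 1 with hT
    set S : ℝ := 2 * (R + 1) * R + 8 * (R / 2 + (R + 1)) ^ 2 + 2 with hS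
    have hident : (fun p : ℝ × ℝ => Ψ₁ p * Lstar1 (Mw1 1 (1/2) S T Ψ₁ Ψ₂)
          (Mw2 1 (1/2) S T Ψ₁ Ψ₂) p + Ψ₂ p * Lstar2 (Mw1 1 (1/2) S T Ψ₁ Ψ₂)
          (Mw2 1 (1/2) S T Ψ₁ Ψ₂) p)
        =ᵐ[volume] (fun p => GA 1 (1/2) S T Ψ₁ Ψ₂ p + GB 1 (1/2) S T Ψ₁ Ψ₂ p
          + Qf 1 (1/2) S T Ψ₁ Ψ₂ p) := by
      filter_upwards [ae_Kcp_ne_zero] with p hp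
      exact key_identity h1 h2 hp
    rw [MeasureTheory.integral_congr_ae hident]
    have hIGA := integrable_GA (μ := 1) (δ := 1/2) (s := S) (t := T) h1 h2 hs1 hs2
    have hIGB := integrable_GB (μ := 1) (δ := 1/2) (s := S) (t := T) h1 h2 hs1 hs2
    have hIQ := integrable_Qf (μ := 1) (δ := 1/2) (s := S) (t := T) h1 h2 hs1 hs2
    have h12 : Integrable (fun p : ℝ × ℝ => GA 1 (1/2) S T Ψ₁ Ψ₂ p + GB 1 (1/2) S T Ψ₁ Ψ₂ p) :=
      hIGA.add hIGB
    have htot : ∫ p : ℝ × ℝ, (GA 1 (1/2) S T Ψ₁ Ψ₂ p + GB 1 (1/2) S T Ψ₁ Ψ₂ p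
        + Qf 1 (1/2) S T Ψ₁ Ψ₂ p) = ∫ p : ℝ × ℝ, Qf 1 (1/2) S T Ψ₁ Ψ₂ p := by
      have e1 : ∫ p : ℝ × ℝ, (GA 1 (1/2) S T Ψ₁ Ψ₂ p + GB 1 (1/2) S T Ψ₁ Ψ₂ p
          + Qf 1 (1/2) S T Ψ₁ Ψ₂ p)
          = (∫ p : ℝ × ℝ, (GA 1 (1/2) S T Ψ₁ Ψ₂ p + GB 1 (1/2) S T Ψ₁ Ψ₂ p))
            + ∫ p : ℝ × ℝ, Qf 1 (1/2) S T Ψ₁ Ψ₂ p := by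
        simpa using MeasureTheory.integral_add h12 hIQ
      have e2 : ∫ p : ℝ × ℝ, (GA 1 (1/2) S T Ψ₁ Ψ₂ p + GB 1 (1/2) S T Ψ₁ Ψ₂ p)
          = (∫ p : ℝ × ℝ, GA 1 (1/2) S T Ψ₁ Ψ₂ p) + ∫ p : ℝ × ℝ, GB 1 (1/2) S T Ψ₁ Ψ₂ p := by
        simpa using MeasureTheory.integral_add hIGA hIGB
      rw [e1, e2, integral_GA_eq_zero h1 h2 hs1 hs2, integral_GB_eq_zero h1 h2 hs1 hs2]
      ring
    rw [htot]
    have hIRHS : Integrable (fun p : ℝ × ℝ => |Kcp p| * Ψ₁ p ^ 2 + Ψ₂ p ^ 2) := by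
      apply Continuous.integrable_of_hasCompactSupport
      · exact (Kcp_continuous.abs.mul (h1.continuous.pow 2)).add (h2.continuous.pow 2)
      · exact hcs_of_zero hs1 hs2 (fun p e1 e2 => by simp [e1, e2])
    have hQbound : ∀ p : ℝ × ℝ,
        1/16 * (|Kcp p| * Ψ₁ p ^ 2 + Ψ₂ p ^ 2) ≤ Qf 1 (1/2) S T Ψ₁ Ψ₂ p := by
      intro p
      by_cases hmemp : p ∈ tsupport Ψ₁ ∪ tsupport Ψ₂
      · have hpΩ : p ∈ Ω := by
          rcases hmemp with h | h
          exacts [ht1 h, ht2 h]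
        have hy' := abs_le.1 (hmem p hpΩ).2
        have hprod1 : (0 : ℝ) ≤ (R + 1) * (R - p.2) :=
          mul_nonneg (by linarith) (by linarith [hy'.2])
        have hprod2 : (0 : ℝ) ≤ (R + 1) * (p.2 + R) :=
          mul_nonneg (by linarith) (by linarith [hy'.1])
        simp only [Qf, mCoeff, hS, hT]
        split_ifs with hK
        · rw [abs_of_pos hK]
          nlinarith [mul_nonneg hK.le (sq_nonneg (Ψ₁ p)),
            sq_nonneg (2 * (-(p.2/2) - (R + 1)) * Ψ₁ p + Ψ₂ p / 4),
            mul_nonneg (by nlinarith [hprod1, sq_nonneg R] :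
              (0 : ℝ) ≤ (2 * (R + 1) * R + 8 * (R / 2 + (R + 1)) ^ 2 + 2)/2 + p.2^2
                - (R + 1) * p.2 - 4 * (-(p.2/2) - (R + 1))^2) (sq_nonneg (Ψ₁ p))]
        · push_neg at hK
          rw [abs_of_nonpos hK]
          nlinarith [mul_nonneg (neg_nonneg.2 hK) (sq_nonneg (Ψ₁ p)),
            sq_nonneg (2 * (p.2/2 - (R + 1)) * Ψ₁ p + Ψ₂ p / 4),
            sq_nonneg (Ψ₂ p),
            mul_nonneg (by nlinarith [hprod2, sq_nonneg R] :
              (0 : ℝ) ≤ (2 * (R + 1) * R + 8 * (R / 2 + (R + 1)) ^ 2 + 2)/2 + p.2^2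
                - (R + 1) * p.2 - 4 * (p.2/2 - (R + 1))^2) (sq_nonneg (Ψ₁ p))]
      · rw [Set.mem_union] at hmemp
        push_neg at hmemp
        have e1 : Ψ₁ p = 0 := image_eq_zero_of_notMem_tsupport hmemp.1
        have e2 : Ψ₂ p = 0 := image_eq_zero_of_notMem_tsupport hmemp.2
        simp [Qf, e1, e2]
    have hmono : ∫ p : ℝ × ℝ, 1/16 * (|Kcp p| * Ψ₁ p ^ 2 + Ψ₂ p ^ 2)
        ≤ ∫ p : ℝ × ℝ, Qf 1 (1/2) S T Ψ₁ Ψ₂ p :=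
      MeasureTheory.integral_mono (hIRHS.const_mul _) hIQ (fun p => hQbound p)
    rw [ge_iff_le]
    calc (1:ℝ)/16 * ∫ p : ℝ × ℝ, (|Kcp p| * Ψ₁ p ^ 2 + Ψ₂ p ^ 2)
        = ∫ p : ℝ × ℝ, 1/16 * (|Kcp p| * Ψ₁ p ^ 2 + Ψ₂ p ^ 2) :=
          (MeasureTheory.integral_const_mul _ _).symm
      _ ≤ ∫ p : ℝ × ℝ, Qf 1 (1/2) S T Ψ₁ Ψ₂ p := hmono
end

section
/- Let Ω ⊂ ℝ² be a bounded open set and let 𝒦(x,y) = x − y². Then there exists a constant C > 0 depending only on Ω such that for every u ∈ C₀^∞(Ω), ∫_Ω u² dx dy ≤ C ∫_Ω (|𝒦| u_x² + u_y²) dx dy. Consequently the norms (∫_Ω (|𝒦|u_x² + u_y² + u²) dx dy)^{1/2} and (∫_Ω (|𝒦|u_x² + u_y²) dx dy)^{1/2} are equivalent on C₀^∞(Ω). -/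
open MeasureTheory Real

set_option maxHeartbeats 1000000

/-- A test function: smooth with compact support contained in Ω. -/
def IsTestFun (Ω : Set (ℝ × ℝ)) (ξ : ℝ × ℝ → ℝ) : Prop :=
  ContDiff ℝ (⊤ : ℕ∞) ξ ∧ HasCompactSupport ξ ∧ tsupport ξ ⊆ Ω

/-- One-dimensional Poincaré inequality for compactly supported smooth functions. -/
lemma one_dim_poincare (M : ℝ) (hM : 0 < M) (g : ℝ → ℝ) (hg : ContDiff ℝ (⊤ : ℕ∞) g)
    (hsupp : Function.support g ⊆ Set.Icc (-M) M) :
    ∫ y, g y ^ 2 ≤ 16 * M ^ 2 * ∫ y, deriv g y ^ 2 := by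
  have hgz : ∀ x ∉ Set.Icc (-M) M, g x = 0 := by
    intro x hx
    by_contra h
    exact hx (hsupp h)
  have hcg : HasCompactSupport g := HasCompactSupport.intro isCompact_Icc hgz
  have hgc : Continuous g := hg.continuous
  have hg'c : Continuous (deriv g) := hg.continuous_deriv (by simp)
  have hcg2 : HasCompactSupport (fun y => g y ^ 2) :=
    hcg.comp_left (g := (· ^ 2)) (by simp)
  have hcg'2 : HasCompactSupport (fun y => deriv g y ^ 2) :=
    hcg.deriv.comp_left (g := (· ^ 2)) (by simp)
  have Ig2 : Integrable (fun y => g y ^ 2) := (hgc.pow 2).integrable_of_hasCompactSupport hcg2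
  have Ig'2 : Integrable (fun y => deriv g y ^ 2) :=
    (hg'c.pow 2).integrable_of_hasCompactSupport hcg'2
  set I := ∫ y, g y ^ 2 with hIdef
  set J := ∫ y, deriv g y ^ 2 with hJdef
  have hI0 : 0 ≤ I := integral_nonneg fun y => sq_nonneg _
  have hJ0 : 0 ≤ J := integral_nonneg fun y => sq_nonneg _
  have Ih : Integrable (fun t => g t ^ 2 / (4 * M) + 4 * M * deriv g t ^ 2) :=
    (Ig2.div_const _).add (Ig'2.const_mul _)
  have hKval : ∫ t, (g t ^ 2 / (4 * M) + 4 * M * deriv g t ^ 2) = I / (4 * M) + 4 * M * J := by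
    rw [integral_add (Ig2.div_const _) (Ig'2.const_mul _), integral_div, integral_const_mul]
  have hptwise : ∀ y, g y ^ 2 ≤ I / (4 * M) + 4 * M * J := by
    intro y
    rcases eq_or_ne (g y) 0 with h0 | h0
    · rw [h0]
      have h4M : (0:ℝ) < 4 * M := by linarith
      have := add_nonneg (div_nonneg hI0 h4M.le) (mul_nonneg h4M.le hJ0)
      simpa using this
    · have hy : y ∈ Set.Icc (-M) M := hsupp h0
      set a := -(M + 1) with hadef
      have hay : a ≤ y := by
        have := hy.1
        simp only [hadef]
        linarith
      have hga : g a = 0 := by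
        apply hgz
        simp only [Set.mem_Icc, hadef]
        push_neg
        intro h
        linarith
      have hFTC : ∫ t in a..y, (2 * g t * deriv g t) = g y ^ 2 - g a ^ 2 := by
        apply intervalIntegral.integral_eq_sub_of_hasDerivAt
        · intro t _
          have h := ((hg.differentiable (by simp) t).hasDerivAt).fun_pow 2
          simpa using h
        · exact ((continuous_const.mul hgc).mul hg'c).intervalIntegrable _ _
      have h2 : ∫ t in a..y, (2 * g t * deriv g t) ≤
          ∫ t in a..y, (g t ^ 2 / (4 * M) + 4 * M * deriv g t ^ 2) := by
        apply intervalIntegral.integral_mono_on hay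
          (((continuous_const.mul hgc).mul hg'c).intervalIntegrable _ _) Ih.intervalIntegrable
        intro t _
        have h4M : (0:ℝ) < 4 * M := by linarith
        rw [← sub_nonneg]
        have key : g t ^ 2 / (4 * M) + 4 * M * deriv g t ^ 2 - 2 * g t * deriv g t =
            (g t - 4 * M * deriv g t) ^ 2 / (4 * M) := by
          field_simp
          ring
        show 0 ≤ g t ^ 2 / (4 * M) + 4 * M * deriv g t ^ 2 - 2 * g t * deriv g t
        rw [key]
        positivity
      have h3 : ∫ t in a..y, (g t ^ 2 / (4 * M) + 4 * M * deriv g t ^ 2) ≤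
          I / (4 * M) + 4 * M * J := by
        rw [intervalIntegral.integral_of_le hay, ← hKval]
        apply setIntegral_le_integral Ih
        filter_upwards with t
        have h4M : (0:ℝ) < 4 * M := by linarith
        exact add_nonneg (div_nonneg (sq_nonneg _) h4M.le)
          (mul_nonneg h4M.le (sq_nonneg _))
      have : g y ^ 2 = ∫ t in a..y, (2 * g t * deriv g t) := by
        rw [hFTC, hga]
        ring
      linarith
  have hIeq : I = ∫ y in Set.Icc (-M) M, g y ^ 2 :=
    (setIntegral_eq_integral_of_forall_compl_eq_zero (fun x hx => by rw [hgz x hx]; ring)).symm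
  have hbound : I ≤ 2 * M * (I / (4 * M) + 4 * M * J) := by
    calc I = ∫ y in Set.Icc (-M) M, g y ^ 2 := hIeq
      _
        ≤ ∫ _ in Set.Icc (-M) M, (I / (4 * M) + 4 * M * J) := by
          apply setIntegral_mono_on Ig2.integrableOn
            (integrableOn_const measure_Icc_lt_top.ne enorm_ne_top) measurableSet_Icc
          exact fun y _ => hptwise y
      _ = 2 * M * (I / (4 * M) + 4 * M * J) := by
          rw [setIntegral_const, Real.volume_real_Icc_of_le (by linarith), smul_eq_mul]
          ring
  have hhalf : 2 * M * (I / (4 * M)) = I / 2 := by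
    field_simp
    ring
  nlinarith [hbound, hhalf, sq_nonneg M]

/-- `pdx` and `pdy` of a smooth function as applications of its Fréchet derivative. -/
lemma pd_eq (u : ℝ × ℝ → ℝ) (hu : ContDiff ℝ (⊤ : ℕ∞) u) :
    (pdx u = fun p => fderiv ℝ u p (1, 0)) ∧ (pdy u = fun p => fderiv ℝ u p (0, 1)) := by
  constructor
  · funext p
    have h1 : HasDerivAt (fun t : ℝ => ((t, p.2) : ℝ × ℝ)) ((1 : ℝ), (0 : ℝ)) p.1 :=
      (hasDerivAt_id p.1).prodMk (hasDerivAt_const p.1 p.2)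
    have h2 : HasFDerivAt u (fderiv ℝ u (p.1, p.2)) (p.1, p.2) :=
      (hu.differentiable (by simp) (p.1, p.2)).hasFDerivAt
    exact (h2.comp_hasDerivAt p.1 h1).deriv
  · funext p
    have h1 : HasDerivAt (fun t : ℝ => ((p.1, t) : ℝ × ℝ)) ((0 : ℝ), (1 : ℝ)) p.2 :=
      (hasDerivAt_const p.2 p.1).prodMk (hasDerivAt_id p.2)
    have h2 : HasFDerivAt u (fderiv ℝ u (p.1, p.2)) (p.1, p.2) :=
      (hu.differentiable (by simp) (p.1, p.2)).hasFDerivAt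
    exact (h2.comp_hasDerivAt p.2 h1).deriv

/-- Integrability and vanishing facts for a test function. -/
lemma testfun_facts (Ω : Set (ℝ × ℝ)) (u : ℝ × ℝ → ℝ) (hu : IsTestFun Ω u) :
    Integrable (fun p => u p ^ 2) ∧
    Integrable (fun p => (pdy u p) ^ 2) ∧
    Integrable (fun p => |Kcp p| * (pdx u p) ^ 2 + (pdy u p) ^ 2) ∧
    (∀ p ∉ Ω, u p = 0) ∧ (∀ p ∉ Ω, pdy u p = 0) := by
  obtain ⟨hC, hCS, hsub⟩ := hu
  obtain ⟨hpdx, hpdy⟩ := pd_eq u hC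
  have hcontf : Continuous (fderiv ℝ u) := hC.continuous_fderiv (by simp)
  have hcx : Continuous (pdx u) := by rw [hpdx]; exact hcontf.clm_apply continuous_const
  have hcy : Continuous (pdy u) := by rw [hpdy]; exact hcontf.clm_apply continuous_const
  have hsx : HasCompactSupport (pdx u) := by rw [hpdx]; exact hCS.fderiv_apply ℝ (1, 0)
  have hsy : HasCompactSupport (pdy u) := by rw [hpdy]; exact hCS.fderiv_apply ℝ (0, 1)
  have hKcont : Continuous fun p => |Kcp p| := by
    have : Continuous Kcp := (continuous_fst.sub (continuous_snd.pow 2))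
    exact this.abs
  have Iu2 : Integrable (fun p => u p ^ 2) :=
    (hC.continuous.pow 2).integrable_of_hasCompactSupport (hCS.comp_left (g := (· ^ 2)) (by simp) : HasCompactSupport (fun p => u p ^ 2))
  have Iy2 : Integrable (fun p => (pdy u p) ^ 2) :=
    (hcy.pow 2).integrable_of_hasCompactSupport (hsy.comp_left (g := (· ^ 2)) (by simp) : HasCompactSupport (fun p => (pdy u p) ^ 2))
  have Ix2 : Integrable (fun p => |Kcp p| * (pdx u p) ^ 2) := by
    apply (hKcont.mul (hcx.pow 2)).integrable_of_hasCompactSupport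
    have hsx2 : HasCompactSupport (fun p => (pdx u p) ^ 2) :=
      hsx.comp_left (g := (· ^ 2)) (by simp)
    exact hsx2.mul_left
  refine ⟨Iu2, Iy2, Ix2.fun_add Iy2, ?_, ?_⟩
  · intro p hp
    exact image_eq_zero_of_notMem_tsupport (fun h => hp (hsub h))
  · intro p hp
    have hpns : p ∉ tsupport (fderiv ℝ u) := fun h => hp (hsub (tsupport_fderiv_subset ℝ h))
    have : fderiv ℝ u p = 0 := image_eq_zero_of_notMem_tsupport hpns
    rw [hpdy]
    simp [this]

/-- The main inequality (with explicit constant `16 M²`). -/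
lemma main_ineq (Ω : Set (ℝ × ℝ)) (hΩo : IsOpen Ω) (M : ℝ) (hM : 0 < M)
    (hR : Ω ⊆ Metric.closedBall 0 M) (u : ℝ × ℝ → ℝ) (hu : IsTestFun Ω u) :
    (∫ p in Ω, (u p) ^ 2) ≤
      16 * M ^ 2 * ∫ p in Ω, (|Kcp p| * (pdx u p) ^ 2 + (pdy u p) ^ 2) := by
  obtain ⟨Iu2, Iy2, Irhs, hu0, hy0⟩ := testfun_facts Ω u hu
  have hC := hu.1
  have hsub := hu.2.2
  -- reduce both sides to integrals over all of ℝ²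
  have hL : (∫ p in Ω, (u p) ^ 2) = ∫ p, (u p) ^ 2 :=
    setIntegral_eq_integral_of_forall_compl_eq_zero (fun p hp => by rw [hu0 p hp]; ring)
  have hy2eq : (∫ p in Ω, (pdy u p) ^ 2) = ∫ p, (pdy u p) ^ 2 :=
    setIntegral_eq_integral_of_forall_compl_eq_zero (fun p hp => by rw [hy0 p hp]; ring)
  -- Fubini
  have Iu2' : Integrable (fun p : ℝ × ℝ => u p ^ 2) ((volume : Measure ℝ).prod volume) := by
    rwa [← MeasureTheory.Measure.volume_eq_prod]
  have Iy2' : Integrable (fun p : ℝ × ℝ => (pdy u p) ^ 2) ((volume : Measure ℝ).prod volume) := by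
    rwa [← MeasureTheory.Measure.volume_eq_prod]
  have hfub1 : (∫ p, (u p) ^ 2) = ∫ x, ∫ y, u (x, y) ^ 2 := by
    rw [MeasureTheory.Measure.volume_eq_prod]
    exact MeasureTheory.integral_prod _ Iu2'
  have hfub2 : (∫ p, (pdy u p) ^ 2) = ∫ x, ∫ y, (pdy u (x, y)) ^ 2 := by
    rw [MeasureTheory.Measure.volume_eq_prod]
    exact MeasureTheory.integral_prod _ Iy2'
  -- sliced inequality
  have hslice : ∀ x : ℝ, (∫ y, u (x, y) ^ 2) ≤ 16 * M ^ 2 * ∫ y, (pdy u (x, y)) ^ 2 := by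
    intro x
    have hgC : ContDiff ℝ (⊤ : ℕ∞) (fun y => u (x, y)) :=
      hC.comp (contDiff_const.prodMk contDiff_id)
    have hgsupp : Function.support (fun y => u (x, y)) ⊆ Set.Icc (-M) M := by
      intro y hy
      have hmem : (x, y) ∈ Ω := hsub (subset_closure hy)
      have := hR hmem
      rw [Metric.mem_closedBall, dist_zero_right, Prod.norm_def] at this
      have h2 : ‖y‖ ≤ M := le_trans (le_max_right _ _) this
      rw [Real.norm_eq_abs, abs_le] at h2
      exact ⟨h2.1, h2.2⟩
    have key := one_dim_poincare M hM (fun y => u (x, y)) hgC hgsupp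
    have hderiv : ∀ y, deriv (fun t => u (x, t)) y = pdy u (x, y) := fun y => rfl
    calc (∫ y, u (x, y) ^ 2) ≤ 16 * M ^ 2 * ∫ y, deriv (fun t => u (x, t)) y ^ 2 := key
      _ = 16 * M ^ 2 * ∫ y, (pdy u (x, y)) ^ 2 := by simp only [hderiv]
  -- integrate the sliced inequality
  have hInt1 : Integrable (fun x => ∫ y, u (x, y) ^ 2) := Iu2'.integral_prod_left
  have hInt2 : Integrable (fun x => ∫ y, (pdy u (x, y)) ^ 2) := Iy2'.integral_prod_left
  have hmono : (∫ x, ∫ y, u (x, y) ^ 2) ≤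
      ∫ x, 16 * M ^ 2 * ∫ y, (pdy u (x, y)) ^ 2 :=
    integral_mono hInt1 (hInt2.const_mul _) hslice
  have hfinal : (∫ p in Ω, (u p) ^ 2) ≤ 16 * M ^ 2 * ∫ p in Ω, (pdy u p) ^ 2 := by
    rw [hL, hfub1, hy2eq, hfub2]
    calc (∫ x, ∫ y, u (x, y) ^ 2)
        ≤ ∫ x, 16 * M ^ 2 * ∫ y, (pdy u (x, y)) ^ 2 := hmono
      _ = 16 * M ^ 2 * ∫ x, ∫ y, (pdy u (x, y)) ^ 2 := integral_const_mul _ _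
  refine le_trans hfinal ?_
  have hYX : (∫ p in Ω, (pdy u p) ^ 2) ≤
      ∫ p in Ω, (|Kcp p| * (pdx u p) ^ 2 + (pdy u p) ^ 2) := by
    apply setIntegral_mono_on Iy2.integrableOn Irhs.integrableOn hΩo.measurableSet
    intro p _
    have : 0 ≤ |Kcp p| * (pdx u p) ^ 2 := mul_nonneg (abs_nonneg _) (sq_nonneg _)
    linarith
  nlinarith [sq_nonneg M]

/-- The weighted Poincaré inequality: ∫ u² ≤ C ∫ (|𝒦|u_x² + u_y²), and the
consequent equivalence of the full and reduced H¹₀(Ω;𝒦) norms on C₀^∞(Ω). -/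
theorem weighted_poincare (Ω : Set (ℝ × ℝ)) (hΩo : IsOpen Ω)
    (hΩb : Bornology.IsBounded Ω) :
    ∃ C > (0 : ℝ),
      (∀ u : ℝ × ℝ → ℝ, IsTestFun Ω u →
        (∫ p in Ω, (u p) ^ 2) ≤ C * ∫ p in Ω, (|Kcp p| * (pdx u p) ^ 2 + (pdy u p) ^ 2)) ∧
      (∀ u : ℝ × ℝ → ℝ, IsTestFun Ω u →
        Real.sqrt (∫ p in Ω, (|Kcp p| * (pdx u p) ^ 2 + (pdy u p) ^ 2)) ≤
          Real.sqrt (∫ p in Ω, (|Kcp p| * (pdx u p) ^ 2 + (pdy u p) ^ 2 + (u p) ^ 2)) ∧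
        Real.sqrt (∫ p in Ω, (|Kcp p| * (pdx u p) ^ 2 + (pdy u p) ^ 2 + (u p) ^ 2)) ≤
          Real.sqrt (1 + C) *
            Real.sqrt (∫ p in Ω, (|Kcp p| * (pdx u p) ^ 2 + (pdy u p) ^ 2))) := by
  obtain ⟨R, hR⟩ := hΩb.subset_closedBall 0
  set M := max R 1 with hMdef
  have hM : 0 < M := lt_of_lt_of_le one_pos (le_max_right _ _)
  have hRM : Ω ⊆ Metric.closedBall 0 M :=
    hR.trans (Metric.closedBall_subset_closedBall (le_max_left _ _))
  set C := 16 * M ^ 2 with hCdef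
  have hCpos : 0 < C := by positivity
  have part1 : ∀ u : ℝ × ℝ → ℝ, IsTestFun Ω u →
      (∫ p in Ω, (u p) ^ 2) ≤ C * ∫ p in Ω, (|Kcp p| * (pdx u p) ^ 2 + (pdy u p) ^ 2) :=
    fun u hu => main_ineq Ω hΩo M hM hRM u hu
  refine ⟨C, hCpos, part1, ?_⟩
  intro u hu
  obtain ⟨Iu2, Iy2, Irhs, hu0, hy0⟩ := testfun_facts Ω u hu
  set A := ∫ p in Ω, (|Kcp p| * (pdx u p) ^ 2 + (pdy u p) ^ 2) with hAdef
  have hA0 : 0 ≤ A := by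
    apply setIntegral_nonneg hΩo.measurableSet
    intro p _
    have := mul_nonneg (abs_nonneg (Kcp p)) (sq_nonneg (pdx u p))
    nlinarith [sq_nonneg (pdy u p)]
  have hsplit : (∫ p in Ω, (|Kcp p| * (pdx u p) ^ 2 + (pdy u p) ^ 2 + (u p) ^ 2)) =
      A + ∫ p in Ω, (u p) ^ 2 :=
    integral_add Irhs.integrableOn Iu2.integrableOn
  have hu2nonneg : 0 ≤ ∫ p in Ω, (u p) ^ 2 :=
    setIntegral_nonneg hΩo.measurableSet (fun p _ => sq_nonneg _)
  constructor
  · apply Real.sqrt_le_sqrt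
    rw [hsplit]
    linarith
  · rw [hsplit, ← Real.sqrt_mul (by linarith : (0:ℝ) ≤ 1 + C)]
    apply Real.sqrt_le_sqrt
    have := part1 u hu
    nlinarith
end

section
/- Let Ω ⊂ ℝ² be a bounded open set, 𝒦(x,y) = x − y², κ ∈ [0,1), and Lu = (x − y²)u_xx + u_yy + κ u_x. Then there exist a constant N with 1/(3 − κ) < N < 1/(κ + 1) and a constant C > 0 such that, setting Mu = −u − N|𝒦| u_x − 4N y u_y, the inequality ∫_Ω Mu · Lu dx dy ≥ C ∫_Ω (|𝒦| u_x² + u_y²) dx dy holds for every u ∈ C₀^∞(Ω). -/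
open MeasureTheory Real

/-- The cold-plasma operator Lu = (x - y²)u_xx + u_yy + κ u_x. -/
noncomputable def Lop (κ : ℝ) (u : ℝ × ℝ → ℝ) (p : ℝ × ℝ) : ℝ :=
  Kcp p * pdx (pdx u) p + pdy (pdy u) p + κ * pdx u p

/-- The multiplier Mu = -u - N|𝒦|u_x - 4Ny u_y. -/
noncomputable def MMultN (N : ℝ) (u : ℝ × ℝ → ℝ) (p : ℝ × ℝ) : ℝ :=
  -u p - N * |Kcp p| * pdx u p - 4 * N * p.2 * pdy u p


open MeasureTheory Real Set Function Filter

namespace CPaux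

noncomputable def Sg (p : ℝ × ℝ) : ℝ := if Kcp p < 0 then -1 else 1

lemma Sg_cases (p : ℝ × ℝ) : Sg p = -1 ∨ Sg p = 1 := by
  unfold Sg; split <;> simp

lemma abs_Sg_le (p : ℝ × ℝ) : ‖Sg p‖ ≤ 1 := by
  unfold Sg; split <;> simp

lemma continuous_Kcp : Continuous Kcp := by
  have : Continuous fun p : ℝ × ℝ => p.1 - p.2 ^ 2 := by fun_prop
  exact this

lemma contDiff_Kcp : ContDiff ℝ (⊤ : ℕ∞) Kcp := by
  have : ContDiff ℝ (⊤ : ℕ∞) fun p : ℝ × ℝ => p.1 - p.2 ^ 2 := by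
    exact contDiff_fst.sub (contDiff_snd.pow 2)
  exact this

lemma measurable_Sg : Measurable Sg := by
  unfold Sg
  exact Measurable.ite (measurableSet_lt continuous_Kcp.measurable measurable_const)
    measurable_const measurable_const

/-! ### slices -/

lemma contDiff_sliceX {f : ℝ × ℝ → ℝ} (hf : ContDiff ℝ (⊤ : ℕ∞) f) (y : ℝ) :
    ContDiff ℝ (⊤ : ℕ∞) (fun t => f (t, y)) :=
  hf.comp (contDiff_id.prodMk contDiff_const)

lemma contDiff_sliceY {f : ℝ × ℝ → ℝ} (hf : ContDiff ℝ (⊤ : ℕ∞) f) (x : ℝ) :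
    ContDiff ℝ (⊤ : ℕ∞) (fun t => f (x, t)) :=
  hf.comp (contDiff_const.prodMk contDiff_id)

lemma hasDerivAt_sliceX {f : ℝ × ℝ → ℝ} (hf : ContDiff ℝ (⊤ : ℕ∞) f) (x y : ℝ) :
    HasDerivAt (fun t => f (t, y)) (pdx f (x, y)) x :=
  ((contDiff_sliceX hf y).differentiable (by simp) x).hasDerivAt

lemma hasDerivAt_sliceY {f : ℝ × ℝ → ℝ} (hf : ContDiff ℝ (⊤ : ℕ∞) f) (x y : ℝ) :
    HasDerivAt (fun t => f (x, t)) (pdy f (x, y)) y :=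
  ((contDiff_sliceY hf x).differentiable (by simp) y).hasDerivAt

lemma hcs_sliceX {f : ℝ × ℝ → ℝ} (hf : HasCompactSupport f) (y : ℝ) :
    HasCompactSupport (fun t => f (t, y)) := by
  obtain ⟨r, hr⟩ := hf.isBounded.subset_closedBall 0
  apply HasCompactSupport.intro (isCompact_Icc (a := -r) (b := r))
  intro t ht
  apply image_eq_zero_of_notMem_tsupport
  intro hmem
  have := hr hmem
  rw [Metric.mem_closedBall, Prod.dist_eq] at this
  have h1 : dist t 0 ≤ r := le_trans (le_max_left _ _) this
  rw [Real.dist_eq, sub_zero] at h1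
  exact ht ⟨(abs_le.mp h1).1, (abs_le.mp h1).2⟩

lemma hcs_sliceY {f : ℝ × ℝ → ℝ} (hf : HasCompactSupport f) (x : ℝ) :
    HasCompactSupport (fun t => f (x, t)) := by
  obtain ⟨r, hr⟩ := hf.isBounded.subset_closedBall 0
  apply HasCompactSupport.intro (isCompact_Icc (a := -r) (b := r))
  intro t ht
  apply image_eq_zero_of_notMem_tsupport
  intro hmem
  have := hr hmem
  rw [Metric.mem_closedBall, Prod.dist_eq] at this
  have h1 : dist t 0 ≤ r := le_trans (le_max_right _ _) this
  rw [Real.dist_eq, sub_zero] at h1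
  exact ht ⟨(abs_le.mp h1).1, (abs_le.mp h1).2⟩

/-! ### pdx basics -/

lemma support_pdx_subset (u : ℝ × ℝ → ℝ) : support (pdx u) ⊆ tsupport u := by
  intro p hp
  by_contra hns
  apply hp
  have h0 : u =ᶠ[nhds p] 0 := notMem_tsupport_iff_eventuallyEq.mp hns
  have hc : Tendsto (fun t : ℝ => (t, p.2)) (nhds p.1) (nhds p) := by
    have := (continuous_id.prodMk (continuous_const (y := p.2))).tendsto p.1
    simpa using this
  have h1 : (fun t => u (t, p.2)) =ᶠ[nhds p.1] (fun _ => (0 : ℝ)) := h0.comp_tendsto hc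
  show pdx u p = 0
  unfold pdx
  rw [h1.deriv_eq]
  exact deriv_const _ _

lemma support_pdy_subset (u : ℝ × ℝ → ℝ) : support (pdy u) ⊆ tsupport u := by
  intro p hp
  by_contra hns
  apply hp
  have h0 : u =ᶠ[nhds p] 0 := notMem_tsupport_iff_eventuallyEq.mp hns
  have hc : Tendsto (fun t : ℝ => (p.1, t)) (nhds p.2) (nhds p) := by
    have := ((continuous_const (y := p.1)).prodMk continuous_id).tendsto p.2
    simpa using this
  have h1 : (fun t => u (p.1, t)) =ᶠ[nhds p.2] (fun _ => (0 : ℝ)) := h0.comp_tendsto hc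
  show pdy u p = 0
  unfold pdy
  rw [h1.deriv_eq]
  exact deriv_const _ _

lemma hcs_pdx {u : ℝ × ℝ → ℝ} (hu : HasCompactSupport u) : HasCompactSupport (pdx u) :=
  hu.mono' (support_pdx_subset u)

lemma hcs_pdy {u : ℝ × ℝ → ℝ} (hu : HasCompactSupport u) : HasCompactSupport (pdy u) :=
  hu.mono' (support_pdy_subset u)

lemma pdx_eq_fderiv {u : ℝ × ℝ → ℝ} {p : ℝ × ℝ} (hu : DifferentiableAt ℝ u p) :
    pdx u p = fderiv ℝ u p (1, 0) := by
  have hcurve : HasDerivAt (fun t : ℝ => (t, p.2)) ((1 : ℝ), (0 : ℝ)) p.1 :=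
    (hasDerivAt_id p.1).prodMk (hasDerivAt_const p.1 p.2)
  have h := hu.hasFDerivAt.comp_hasDerivAt p.1 hcurve
  exact h.deriv

lemma pdy_eq_fderiv {u : ℝ × ℝ → ℝ} {p : ℝ × ℝ} (hu : DifferentiableAt ℝ u p) :
    pdy u p = fderiv ℝ u p (0, 1) := by
  have hcurve : HasDerivAt (fun t : ℝ => (p.1, t)) ((0 : ℝ), (1 : ℝ)) p.2 :=
    (hasDerivAt_const p.2 p.1).prodMk (hasDerivAt_id p.2)
  have h := hu.hasFDerivAt.comp_hasDerivAt p.2 hcurve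
  exact h.deriv

lemma contDiff_fderiv_apply {u : ℝ × ℝ → ℝ} (hu : ContDiff ℝ (⊤ : ℕ∞) u) (v : ℝ × ℝ) :
    ContDiff ℝ (⊤ : ℕ∞) (fun p => fderiv ℝ u p v) :=
  (hu.fderiv_right (by simp)).clm_apply contDiff_const

lemma pdx_fun_eq {u : ℝ × ℝ → ℝ} (hu : ContDiff ℝ (⊤ : ℕ∞) u) :
    pdx u = fun p => fderiv ℝ u p (1, 0) :=
  funext fun p => pdx_eq_fderiv ((hu.differentiable (by simp)) p)

lemma pdy_fun_eq {u : ℝ × ℝ → ℝ} (hu : ContDiff ℝ (⊤ : ℕ∞) u) :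
    pdy u = fun p => fderiv ℝ u p (0, 1) :=
  funext fun p => pdy_eq_fderiv ((hu.differentiable (by simp)) p)

lemma contDiff_pdx {u : ℝ × ℝ → ℝ} (hu : ContDiff ℝ (⊤ : ℕ∞) u) : ContDiff ℝ (⊤ : ℕ∞) (pdx u) := by
  rw [pdx_fun_eq hu]; exact contDiff_fderiv_apply hu _

lemma contDiff_pdy {u : ℝ × ℝ → ℝ} (hu : ContDiff ℝ (⊤ : ℕ∞) u) : ContDiff ℝ (⊤ : ℕ∞) (pdy u) := by
  rw [pdy_fun_eq hu]; exact contDiff_fderiv_apply hu _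

lemma mixed_symm {u : ℝ × ℝ → ℝ} (hu : ContDiff ℝ (⊤ : ℕ∞) u) (p : ℝ × ℝ) :
    pdy (pdx u) p = pdx (pdy u) p := by
  have hd : Differentiable ℝ u := hu.differentiable (by simp)
  have hfd : ContDiff ℝ (⊤ : ℕ∞) (fderiv ℝ u) := hu.fderiv_right (by simp)
  have hA : HasFDerivAt (fderiv ℝ u) (fderiv ℝ (fderiv ℝ u) p) p :=
    ((hfd.differentiable (by simp)) p).hasFDerivAt
  have hsymm := second_derivative_symmetric (fun q => (hd q).hasFDerivAt) hA
  have hdc : DifferentiableAt ℝ (fderiv ℝ u) p := (hfd.differentiable (by simp)) p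
  have e1 : pdy (pdx u) p = fderiv ℝ (fderiv ℝ u) p (0, 1) (1, 0) := by
    rw [pdx_fun_eq hu,
      pdy_eq_fderiv (((contDiff_fderiv_apply hu (1, 0)).differentiable (by simp)) p),
      fderiv_clm_apply hdc (differentiableAt_const _)]
    simp
  have e2 : pdx (pdy u) p = fderiv ℝ (fderiv ℝ u) p (1, 0) (0, 1) := by
    rw [pdy_fun_eq hu,
      pdx_eq_fderiv (((contDiff_fderiv_apply hu (0, 1)).differentiable (by simp)) p),
      fderiv_clm_apply hdc (differentiableAt_const _)]
    simp
  rw [e1, e2, hsymm]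


lemma exists_R {g : ℝ → ℝ} (hs : HasCompactSupport g) (a : ℝ) :
    ∃ R : ℝ, |a| < R ∧ 0 < R ∧ (∀ x : ℝ, R ≤ |x| → g x = 0) ∧
      (∀ x : ℝ, R ≤ |x| → deriv g x = 0) := by
  obtain ⟨r, hr⟩ := hs.isBounded.subset_closedBall 0
  have hmax1 : |a| ≤ max r |a| := le_max_right _ _
  have hmax2 : r ≤ max r |a| := le_max_left _ _
  have habs : (0:ℝ) ≤ |a| := abs_nonneg a
  have hout : ∀ x : ℝ, max r |a| + 1 ≤ |x| → x ∉ tsupport g := by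
    intro x hx hmem
    have := hr hmem
    rw [Metric.mem_closedBall, Real.dist_eq, sub_zero] at this
    linarith
  refine ⟨max r |a| + 1, by linarith, by linarith, ?_, ?_⟩
  · exact fun x hx => image_eq_zero_of_notMem_tsupport (hout x hx)
  · intro x hx
    by_contra h
    exact hout x hx (support_deriv_subset h)

lemma restrict_full {f : ℝ → ℝ} {R : ℝ} (hR : 0 < R) (h : ∀ x : ℝ, R ≤ |x| → f x = 0) :
    ∫ x, f x = ∫ x in (-R)..R, f x := by
  rw [intervalIntegral.integral_of_le (by linarith)]
  refine (setIntegral_eq_integral_of_forall_compl_eq_zero (fun x hx => ?_)).symm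
  rw [mem_Ioc] at hx
  apply h
  rcases le_or_gt x (-R) with h1 | h1
  · rw [abs_of_nonpos (by linarith)]; linarith
  · rcases le_or_gt x R with h2 | h2
    · exact absurd ⟨h1, h2⟩ hx
    · rw [abs_of_pos (by linarith)]; linarith

lemma oneD_zero {f : ℝ → ℝ} (hf : ContDiff ℝ (⊤ : ℕ∞) f) (hs : HasCompactSupport f) :
    ∫ x, deriv f x = 0 := by
  obtain ⟨R, _, hR0, hz, hz'⟩ := exists_R hs 0
  have hd : Continuous (deriv f) := hf.continuous_deriv (by simp)
  rw [restrict_full hR0 hz']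
  rw [intervalIntegral.integral_deriv_eq_sub
    (fun x _ => (hf.differentiable (by simp)) x) (hd.intervalIntegrable _ _)]
  rw [hz R (by rw [abs_of_pos hR0]), hz (-R) (by rw [abs_neg, abs_of_pos hR0])]
  ring

lemma intInt_ite {P : ℝ → Prop} [DecidablePred P] (hP : MeasurableSet {x | P x})
    {h : ℝ → ℝ} (hh : Continuous h) (a b : ℝ) :
    IntervalIntegrable (fun y => (if P y then (-1 : ℝ) else 1) * h y) volume a b := by
  have hm : Measurable fun y : ℝ => (if P y then (-1 : ℝ) else 1) :=
    Measurable.ite hP measurable_const measurable_const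
  constructor <;>
  · refine Integrable.bdd_mul ?_ hm.aestronglyMeasurable (c := 1) (Eventually.of_forall fun y => by split <;> simp)
    exact hh.integrableOn_Ioc

lemma oneD_A (a : ℝ) {g : ℝ → ℝ} (hg : ContDiff ℝ (⊤ : ℕ∞) g) (hs : HasCompactSupport g) :
    ∫ x, |x - a| * deriv g x = -∫ x, (if x - a < 0 then (-1 : ℝ) else 1) * g x := by
  obtain ⟨R, haR, hR0, hz, hz'⟩ := exists_R hs a
  obtain ⟨haR1, haR2⟩ := abs_lt.mp haR
  have hgc : Continuous g := hg.continuous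
  have hg' : Continuous (deriv g) := hg.continuous_deriv (by simp)
  have hder : ∀ x : ℝ, HasDerivAt g (deriv g x) x :=
    fun x => ((hg.differentiable (by simp)) x).hasDerivAt
  have hPm : MeasurableSet {x : ℝ | x - a < 0} :=
    measurableSet_lt (by fun_prop) measurable_const
  have hcw : Continuous fun x : ℝ => |x - a| * deriv g x :=
    ((continuous_id.sub continuous_const).abs).mul hg'
  have hgR : g (-R) = 0 := hz (-R) (by rw [abs_neg, abs_of_pos hR0])
  have hgRR : g R = 0 := hz R (by rw [abs_of_pos hR0])
  have hae : ∀ᵐ x : ℝ, x ≠ a := by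
    rw [ae_iff]
    simp only [not_not, setOf_eq_eq_singleton]
    exact measure_singleton a
  -- restrict to [-R, R]
  rw [restrict_full hR0 (fun x hx => by rw [hz' x hx, mul_zero]),
    restrict_full hR0 (fun x hx => by rw [hz x hx, mul_zero])]
  -- split
  rw [← intervalIntegral.integral_add_adjacent_intervals (b := a)
      (hcw.intervalIntegrable _ _) (hcw.intervalIntegrable _ _),
    ← intervalIntegral.integral_add_adjacent_intervals (b := a)
      (intInt_ite hPm hgc _ _) (intInt_ite hPm hgc _ _)]
  have hleft : ∫ x in (-R)..a, |x - a| * deriv g x = ∫ x in (-R)..a, g x := by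
    rw [intervalIntegral.integral_congr (g := fun x => (a - x) * deriv g x) (fun x hx => by
      rw [uIcc_of_le (by linarith)] at hx
      rw [abs_of_nonpos (by linarith [hx.2]), neg_sub])]
    rw [intervalIntegral.integral_mul_deriv_eq_deriv_mul
      (u := fun x => a - x) (u' := fun _ => (-1 : ℝ)) (v := g) (v' := deriv g)
      (fun x _ => (hasDerivAt_id x).const_sub a) (fun x _ => hder x)
      (continuous_const.intervalIntegrable _ _) (hg'.intervalIntegrable _ _)]
    rw [hgR]
    simp [intervalIntegral.integral_neg, neg_one_mul]
  have hright : ∫ x in a..R, |x - a| * deriv g x = -∫ x in a..R, g x := by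
    rw [intervalIntegral.integral_congr (g := fun x => (x - a) * deriv g x) (fun x hx => by
      rw [uIcc_of_le (by linarith)] at hx
      rw [abs_of_nonneg (by linarith [hx.1])])]
    rw [intervalIntegral.integral_mul_deriv_eq_deriv_mul
      (u := fun x => x - a) (u' := fun _ => (1 : ℝ)) (v := g) (v' := deriv g)
      (fun x _ => (hasDerivAt_id x).sub_const a) (fun x _ => hder x)
      (continuous_const.intervalIntegrable _ _) (hg'.intervalIntegrable _ _)]
    rw [hgRR]
    simp
  have hRleft : ∫ x in (-R)..a, (if x - a < 0 then (-1 : ℝ) else 1) * g x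
      = ∫ x in (-R)..a, -g x := by
    apply intervalIntegral.integral_congr_ae
    filter_upwards [hae] with x hx hmem
    rw [uIoc_of_le (by linarith), mem_Ioc] at hmem
    rw [if_pos (by rcases lt_or_eq_of_le hmem.2 with h | h
                   · linarith
                   · exact absurd h hx)]
    ring
  have hRright : ∫ x in a..R, (if x - a < 0 then (-1 : ℝ) else 1) * g x
      = ∫ x in a..R, g x := by
    refine intervalIntegral.integral_congr (fun x hx => ?_)
    rw [uIcc_of_le (by linarith)] at hx
    rw [if_neg (by linarith [hx.1])]
    ring
  rw [hleft, hright, hRleft, hRright, intervalIntegral.integral_neg]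
  ring

lemma oneD_C (a : ℝ) {g : ℝ → ℝ} (hg : ContDiff ℝ (⊤ : ℕ∞) g) (hs : HasCompactSupport g) :
    ∫ x, ((x - a) * |x - a|) * deriv g x = -∫ x, (2 * |x - a|) * g x := by
  obtain ⟨R, haR, hR0, hz, hz'⟩ := exists_R hs a
  obtain ⟨haR1, haR2⟩ := abs_lt.mp haR
  have hgc : Continuous g := hg.continuous
  have hg' : Continuous (deriv g) := hg.continuous_deriv (by simp)
  have hder : ∀ x : ℝ, HasDerivAt g (deriv g x) x :=
    fun x => ((hg.differentiable (by simp)) x).hasDerivAt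
  have habs : Continuous fun x : ℝ => |x - a| :=
    (continuous_id.sub continuous_const).abs
  have hcw : Continuous fun x : ℝ => ((x - a) * |x - a|) * deriv g x :=
    (((continuous_id.sub continuous_const).mul habs).mul hg')
  have hcw2 : Continuous fun x : ℝ => (2 * |x - a|) * g x :=
    ((continuous_const.mul habs).mul hgc)
  have hgR : g (-R) = 0 := hz (-R) (by rw [abs_neg, abs_of_pos hR0])
  have hgRR : g R = 0 := hz R (by rw [abs_of_pos hR0])
  rw [restrict_full hR0 (fun x hx => by rw [hz' x hx, mul_zero]),
    restrict_full hR0 (fun x hx => by rw [hz x hx, mul_zero])]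
  rw [← intervalIntegral.integral_add_adjacent_intervals (b := a)
      (hcw.intervalIntegrable _ _) (hcw.intervalIntegrable _ _),
    ← intervalIntegral.integral_add_adjacent_intervals (b := a)
      (hcw2.intervalIntegrable _ _) (hcw2.intervalIntegrable _ _)]
  have hleft : ∫ x in (-R)..a, ((x - a) * |x - a|) * deriv g x
      = -∫ x in (-R)..a, (2 * (a - x)) * g x := by
    rw [intervalIntegral.integral_congr (g := fun x => (-((a - x) ^ 2)) * deriv g x)
      (fun x hx => by
        rw [uIcc_of_le (by linarith)] at hx
        rw [abs_of_nonpos (by linarith [hx.2])]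
        ring)]
    rw [intervalIntegral.integral_mul_deriv_eq_deriv_mul
      (u := fun x => -((a - x) ^ 2)) (u' := fun x => 2 * (a - x)) (v := g) (v' := deriv g)
      (fun x _ => by
        have := (((hasDerivAt_id x).const_sub a).pow 2).neg
        exact this.congr_deriv (by simp only [id_eq]; push_cast; ring))
      (fun x _ => hder x)
      ((continuous_const.mul (continuous_const.sub continuous_id)).intervalIntegrable _ _)
      (hg'.intervalIntegrable _ _)]
    rw [hgR]
    simp
  have hright : ∫ x in a..R, ((x - a) * |x - a|) * deriv g x
      = -∫ x in a..R, (2 * (x - a)) * g x := by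
    rw [intervalIntegral.integral_congr (g := fun x => ((x - a) ^ 2) * deriv g x)
      (fun x hx => by
        rw [uIcc_of_le (by linarith)] at hx
        rw [abs_of_nonneg (by linarith [hx.1])]
        ring)]
    rw [intervalIntegral.integral_mul_deriv_eq_deriv_mul
      (u := fun x => (x - a) ^ 2) (u' := fun x => 2 * (x - a)) (v := g) (v' := deriv g)
      (fun x _ => by
        have := ((hasDerivAt_id x).sub_const a).pow 2
        exact this.congr_deriv (by simp only [id_eq]; push_cast; ring))
      (fun x _ => hder x)
      ((continuous_const.mul (continuous_id.sub continuous_const)).intervalIntegrable _ _)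
      (hg'.intervalIntegrable _ _)]
    rw [hgRR]
    simp
  have hRleft : ∫ x in (-R)..a, (2 * |x - a|) * g x = ∫ x in (-R)..a, (2 * (a - x)) * g x := by
    refine intervalIntegral.integral_congr (fun x hx => ?_)
    rw [uIcc_of_le (by linarith)] at hx
    rw [abs_of_nonpos (by linarith [hx.2]), neg_sub]
  have hRright : ∫ x in a..R, (2 * |x - a|) * g x = ∫ x in a..R, (2 * (x - a)) * g x := by
    refine intervalIntegral.integral_congr (fun x hx => ?_)
    rw [uIcc_of_le (by linarith)] at hx
    rw [abs_of_nonneg (by linarith [hx.1])]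
  rw [hleft, hright, hRleft, hRright]
  ring


lemma oneD_B (c : ℝ) {g : ℝ → ℝ} (hg : ContDiff ℝ (⊤ : ℕ∞) g) (hs : HasCompactSupport g) :
    ∫ y, |c - y ^ 2| * deriv g y
      = ∫ y, (if c - y ^ 2 < 0 then (-1 : ℝ) else 1) * (2 * y * g y) := by
  have hgc : Continuous g := hg.continuous
  have hg' : Continuous (deriv g) := hg.continuous_deriv (by simp)
  have hder : ∀ x : ℝ, HasDerivAt g (deriv g x) x :=
    fun x => ((hg.differentiable (by simp)) x).hasDerivAt
  have hPm : MeasurableSet {y : ℝ | c - y ^ 2 < 0} :=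
    measurableSet_lt (by fun_prop) measurable_const
  have hcw : Continuous fun y : ℝ => |c - y ^ 2| * deriv g y :=
    ((continuous_const.sub (continuous_id.pow 2)).abs).mul hg'
  have h2yg : Continuous fun y : ℝ => 2 * y * g y :=
    (continuous_const.mul continuous_id).mul hgc
  have hsq : ∀ y : ℝ, HasDerivAt (fun y : ℝ => y ^ 2 - c) (2 * y) y := by
    intro y
    have := (hasDerivAt_pow 2 y).sub_const c
    exact this.congr_deriv (by push_cast; ring)
  have hsq' : ∀ y : ℝ, HasDerivAt (fun y : ℝ => c - y ^ 2) (-(2 * y)) y := by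
    intro y
    have := (hasDerivAt_pow 2 y).const_sub c
    exact this.congr_deriv (by push_cast; ring)
  rcases le_or_gt c 0 with hc | hc
  · -- no kink
    obtain ⟨R, _, hR0, hz, hz'⟩ := exists_R hs 0
    have hgR : g (-R) = 0 := hz (-R) (by rw [abs_neg, abs_of_pos hR0])
    have hgRR : g R = 0 := hz R (by rw [abs_of_pos hR0])
    have e1 : (fun y : ℝ => |c - y ^ 2| * deriv g y) = fun y => (y ^ 2 - c) * deriv g y := by
      funext y
      rw [abs_of_nonpos (by nlinarith [sq_nonneg y]), neg_sub]
    have e2 : (fun y : ℝ => (if c - y ^ 2 < 0 then (-1 : ℝ) else 1) * (2 * y * g y))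
        = fun y => (-(2 * y)) * g y := by
      funext y
      rcases lt_or_eq_of_le (by nlinarith [sq_nonneg y] : c - y ^ 2 ≤ 0) with h | h
      · rw [if_pos h]; ring
      · have hy : y = 0 := by nlinarith [sq_nonneg y]
        rw [hy]; split <;> ring
    rw [e1, e2]
    rw [restrict_full hR0 (fun x hx => by rw [hz' x hx, mul_zero]),
      restrict_full hR0 (fun x hx => by rw [hz x hx, mul_zero])]
    rw [intervalIntegral.integral_mul_deriv_eq_deriv_mul
      (u := fun y => y ^ 2 - c) (u' := fun y => 2 * y) (v := g) (v' := deriv g)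
      (fun x _ => hsq x) (fun x _ => hder x)
      ((continuous_const.mul continuous_id).intervalIntegrable _ _)
      (hg'.intervalIntegrable _ _)]
    rw [hgR, hgRR]
    have hneg : ∫ y in (-R)..R, -(2 * y) * g y = -∫ y in (-R)..R, 2 * y * g y := by
      rw [← intervalIntegral.integral_neg]
      exact intervalIntegral.integral_congr (fun x _ => by ring)
    rw [hneg]
    ring
  · -- kinks at ±√c
    set r := Real.sqrt c with hrdef
    have hr2 : r ^ 2 = c := Real.sq_sqrt hc.le
    have hr0 : 0 < r := Real.sqrt_pos.mpr hc
    obtain ⟨R, hrR, hR0, hz, hz'⟩ := exists_R hs r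
    have hrR' : r < R := lt_of_abs_lt hrR
    have hgR : g (-R) = 0 := hz (-R) (by rw [abs_neg, abs_of_pos hR0])
    have hgRR : g R = 0 := hz R (by rw [abs_of_pos hR0])
    rw [restrict_full hR0 (fun x hx => by rw [hz' x hx, mul_zero]),
      restrict_full hR0 (fun x hx => by
        rw [hz x hx]
        simp)]
    rw [← intervalIntegral.integral_add_adjacent_intervals (a := -R) (b := r) (c := R)
        (hcw.intervalIntegrable _ _) (hcw.intervalIntegrable _ _),
      ← intervalIntegral.integral_add_adjacent_intervals (a := -R) (b := -r) (c := r)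
        (hcw.intervalIntegrable _ _) (hcw.intervalIntegrable _ _),
      ← intervalIntegral.integral_add_adjacent_intervals (a := -R) (b := r) (c := R)
        (intInt_ite hPm h2yg _ _) (intInt_ite hPm h2yg _ _),
      ← intervalIntegral.integral_add_adjacent_intervals (a := -R) (b := -r) (c := r)
        (intInt_ite hPm h2yg _ _) (intInt_ite hPm h2yg _ _)]
    have hae1 : ∀ᵐ y : ℝ, y ≠ -r := by
      rw [ae_iff]
      simp only [not_not, setOf_eq_eq_singleton]
      exact measure_singleton _
    have hae2 : ∀ᵐ y : ℝ, y ≠ r := by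
      rw [ae_iff]
      simp only [not_not, setOf_eq_eq_singleton]
      exact measure_singleton _
    -- left piece
    have hleft : ∫ y in (-R)..(-r), |c - y ^ 2| * deriv g y = -∫ y in (-R)..(-r), 2 * y * g y := by
      rw [intervalIntegral.integral_congr (g := fun y => (y ^ 2 - c) * deriv g y) (fun y hy => by
        rw [uIcc_of_le (by linarith)] at hy
        have : c ≤ y ^ 2 := by nlinarith [hy.2]
        rw [abs_of_nonpos (by linarith), neg_sub])]
      rw [intervalIntegral.integral_mul_deriv_eq_deriv_mul
        (u := fun y => y ^ 2 - c) (u' := fun y => 2 * y) (v := g) (v' := deriv g)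
        (fun x _ => hsq x) (fun x _ => hder x)
        ((continuous_const.mul continuous_id).intervalIntegrable _ _)
        (hg'.intervalIntegrable _ _)]
      rw [hgR]
      have : (-r : ℝ) ^ 2 - c = 0 := by rw [neg_pow]; simp [hr2]
      rw [this]
      ring
    have hmid : ∫ y in (-r)..r, |c - y ^ 2| * deriv g y = ∫ y in (-r)..r, 2 * y * g y := by
      rw [intervalIntegral.integral_congr (g := fun y => (c - y ^ 2) * deriv g y) (fun y hy => by
        rw [uIcc_of_le (by linarith)] at hy
        have : y ^ 2 ≤ c := by nlinarith [hy.1, hy.2]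
        rw [abs_of_nonneg (by linarith)])]
      rw [intervalIntegral.integral_mul_deriv_eq_deriv_mul
        (u := fun y => c - y ^ 2) (u' := fun y => -(2 * y)) (v := g) (v' := deriv g)
        (fun x _ => hsq' x) (fun x _ => hder x)
        (((continuous_const.mul continuous_id).neg).intervalIntegrable _ _)
        (hg'.intervalIntegrable _ _)]
      have h1 : c - r ^ 2 = 0 := by rw [hr2]; ring
      have h2 : c - (-r) ^ 2 = 0 := by rw [neg_pow]; simp [hr2]
      rw [h1, h2]
      have hneg : ∫ y in (-r)..r, -(2 * y) * g y = -∫ y in (-r)..r, 2 * y * g y := by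
        rw [← intervalIntegral.integral_neg]
        exact intervalIntegral.integral_congr (fun x _ => by ring)
      rw [hneg]
      ring
    have hrightp : ∫ y in r..R, |c - y ^ 2| * deriv g y = -∫ y in r..R, 2 * y * g y := by
      rw [intervalIntegral.integral_congr (g := fun y => (y ^ 2 - c) * deriv g y) (fun y hy => by
        rw [uIcc_of_le (by linarith)] at hy
        have : c ≤ y ^ 2 := by nlinarith [hy.1]
        rw [abs_of_nonpos (by linarith), neg_sub])]
      rw [intervalIntegral.integral_mul_deriv_eq_deriv_mul
        (u := fun y => y ^ 2 - c) (u' := fun y => 2 * y) (v := g) (v' := deriv g)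
        (fun x _ => hsq x) (fun x _ => hder x)
        ((continuous_const.mul continuous_id).intervalIntegrable _ _)
        (hg'.intervalIntegrable _ _)]
      rw [hgRR]
      have : (r : ℝ) ^ 2 - c = 0 := by rw [hr2]; ring
      rw [this]
      ring
    -- sign pieces
    have hSleft : ∫ y in (-R)..(-r), (if c - y ^ 2 < 0 then (-1 : ℝ) else 1) * (2 * y * g y)
        = -∫ y in (-R)..(-r), 2 * y * g y := by
      rw [← intervalIntegral.integral_neg]
      apply intervalIntegral.integral_congr_ae
      filter_upwards [hae1] with y hy hmem
      rw [uIoc_of_le (by linarith), mem_Ioc] at hmem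
      have hlt : y < -r := lt_of_le_of_ne hmem.2 hy
      have : c - y ^ 2 < 0 := by nlinarith
      rw [if_pos this]; ring
    have hSmid : ∫ y in (-r)..r, (if c - y ^ 2 < 0 then (-1 : ℝ) else 1) * (2 * y * g y)
        = ∫ y in (-r)..r, 2 * y * g y := by
      refine intervalIntegral.integral_congr (fun y hy => ?_)
      rw [uIcc_of_le (by linarith)] at hy
      have : ¬(c - y ^ 2 < 0) := by push_neg; nlinarith [hy.1, hy.2]
      rw [if_neg this]; ring
    have hSright : ∫ y in r..R, (if c - y ^ 2 < 0 then (-1 : ℝ) else 1) * (2 * y * g y)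
        = -∫ y in r..R, 2 * y * g y := by
      rw [← intervalIntegral.integral_neg]
      apply intervalIntegral.integral_congr_ae
      filter_upwards [hae2] with y hy hmem
      rw [uIoc_of_le (by linarith), mem_Ioc] at hmem
      have hlt : r < y := hmem.1
      have : c - y ^ 2 < 0 := by nlinarith
      rw [if_pos this]; ring
    rw [hleft, hmid, hrightp, hSleft, hSmid, hSright]


/-! ### 2D integration tools -/

lemma integ_cc {f : ℝ × ℝ → ℝ} (hf : Continuous f) (hs : HasCompactSupport f) : Integrable f :=
  hf.integrable_of_hasCompactSupport hs

lemma hcs_mul {c f : ℝ × ℝ → ℝ} (hf : HasCompactSupport f) :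
    HasCompactSupport fun p => c p * f p := by
  apply hf.mono'
  intro p hp
  simp only [mem_support] at hp
  apply subset_tsupport f
  simp only [mem_support]
  intro h
  exact hp (by rw [h, mul_zero])

lemma int2d (f : ℝ × ℝ → ℝ) (hf : Integrable f) : ∫ p, f p = ∫ x, ∫ y, f (x, y) := by
  rw [Measure.volume_eq_prod] at hf ⊢
  exact integral_prod f hf

lemma int2d_swap (f : ℝ × ℝ → ℝ) (hf : Integrable f) : ∫ p, f p = ∫ y, ∫ x, f (x, y) := by
  rw [int2d f hf]
  apply integral_integral_swap
  rw [← Measure.volume_eq_prod]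
  exact hf

lemma ibp_x {F : ℝ × ℝ → ℝ} (hF : ContDiff ℝ (⊤ : ℕ∞) F) (hs : HasCompactSupport F) :
    ∫ p, pdx F p = 0 := by
  have hint : Integrable (pdx F) := integ_cc (contDiff_pdx hF).continuous (hcs_pdx hs)
  rw [int2d_swap _ hint]
  have h : ∀ y : ℝ, (∫ x, pdx F (x, y)) = 0 := fun y =>
    oneD_zero (contDiff_sliceX hF y) (hcs_sliceX hs y)
  simp [h]

lemma ibp_y {F : ℝ × ℝ → ℝ} (hF : ContDiff ℝ (⊤ : ℕ∞) F) (hs : HasCompactSupport F) :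
    ∫ p, pdy F p = 0 := by
  have hint : Integrable (pdy F) := integ_cc (contDiff_pdy hF).continuous (hcs_pdy hs)
  rw [int2d _ hint]
  have h : ∀ x : ℝ, (∫ y, pdy F (x, y)) = 0 := fun x =>
    oneD_zero (contDiff_sliceY hF x) (hcs_sliceY hs x)
  simp [h]

lemma ibp_absK_x {F : ℝ × ℝ → ℝ} (hF : ContDiff ℝ (⊤ : ℕ∞) F) (hs : HasCompactSupport F) :
    ∫ p, |Kcp p| * pdx F p = -∫ p, Sg p * F p := by
  have h1 : Integrable fun p => |Kcp p| * pdx F p :=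
    integ_cc (continuous_Kcp.abs.mul (contDiff_pdx hF).continuous) (hcs_mul (hcs_pdx hs))
  have h2 : Integrable fun p => Sg p * F p :=
    (integ_cc hF.continuous hs).bdd_mul measurable_Sg.aestronglyMeasurable (c := 1) (Eventually.of_forall abs_Sg_le)
  rw [int2d_swap _ h1, int2d_swap _ h2, ← integral_neg]
  refine integral_congr_ae (Eventually.of_forall fun y => ?_)
  exact oneD_A (y ^ 2) (contDiff_sliceX hF y) (hcs_sliceX hs y)

lemma ibp_absK_y {F : ℝ × ℝ → ℝ} (hF : ContDiff ℝ (⊤ : ℕ∞) F) (hs : HasCompactSupport F) :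
    ∫ p, |Kcp p| * pdy F p = ∫ p, Sg p * (2 * p.2 * F p) := by
  have h1 : Integrable fun p => |Kcp p| * pdy F p :=
    integ_cc (continuous_Kcp.abs.mul (contDiff_pdy hF).continuous) (hcs_mul (hcs_pdy hs))
  have h2 : Integrable fun p => Sg p * (2 * p.2 * F p) := by
    refine Integrable.bdd_mul ?_ measurable_Sg.aestronglyMeasurable (c := 1) (Eventually.of_forall abs_Sg_le)
    exact integ_cc ((continuous_const.mul continuous_snd).mul hF.continuous) (hcs_mul hs)
  rw [int2d _ h1, int2d _ h2]
  refine integral_congr_ae (Eventually.of_forall fun x => ?_)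
  exact oneD_B x (contDiff_sliceY hF x) (hcs_sliceY hs x)

lemma ibp_KabsK_x {F : ℝ × ℝ → ℝ} (hF : ContDiff ℝ (⊤ : ℕ∞) F) (hs : HasCompactSupport F) :
    ∫ p, (Kcp p * |Kcp p|) * pdx F p = -∫ p, (2 * |Kcp p|) * F p := by
  have h1 : Integrable fun p => (Kcp p * |Kcp p|) * pdx F p :=
    integ_cc ((continuous_Kcp.mul continuous_Kcp.abs).mul (contDiff_pdx hF).continuous)
      (hcs_mul (hcs_pdx hs))
  have h2 : Integrable fun p => (2 * |Kcp p|) * F p :=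
    integ_cc ((continuous_const.mul continuous_Kcp.abs).mul hF.continuous) (hcs_mul hs)
  rw [int2d_swap _ h1, int2d_swap _ h2, ← integral_neg]
  refine integral_congr_ae (Eventually.of_forall fun y => ?_)
  exact oneD_C (y ^ 2) (contDiff_sliceX hF y) (hcs_sliceX hs y)


lemma zero_of_nmem {u : ℝ × ℝ → ℝ} {p : ℝ × ℝ} (h : p ∉ tsupport u) :
    u p = 0 ∧ pdx u p = 0 ∧ pdy u p = 0 :=
  ⟨image_eq_zero_of_notMem_tsupport h,
   by by_contra hx; exact h (support_pdx_subset u hx),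
   by by_contra hy; exact h (support_pdy_subset u hy)⟩

lemma hcs_of_usupp {u f : ℝ × ℝ → ℝ} (hcs : HasCompactSupport u)
    (h : ∀ p, u p = 0 → pdx u p = 0 → pdy u p = 0 → f p = 0) : HasCompactSupport f := by
  apply hcs.mono'
  intro p hp
  by_contra hmem
  obtain ⟨h1, h2, h3⟩ := zero_of_nmem hmem
  exact hp (h p h1 h2 h3)


/-! ### The five flux functions -/

noncomputable def FA (κ : ℝ) (u : ℝ × ℝ → ℝ) : ℝ × ℝ → ℝ := fun q =>
  -(Kcp q * (u q * pdx u q)) + (1 - κ) / 2 * (u q * u q)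
    - 2 * (q.2 * (Kcp q * (pdx u q * pdy u q)))

noncomputable def FB (u : ℝ × ℝ → ℝ) : ℝ × ℝ → ℝ := fun q =>
  -(u q * pdy u q) + q.2 * (Kcp q * (pdx u q * pdx u q)) - q.2 * (pdy u q * pdy u q)

noncomputable def FC (u : ℝ × ℝ → ℝ) : ℝ × ℝ → ℝ := fun q => pdy u q * pdy u q / 4

noncomputable def FD (u : ℝ × ℝ → ℝ) : ℝ × ℝ → ℝ := fun q => -(pdx u q * pdy u q) / 2

noncomputable def FE (u : ℝ × ℝ → ℝ) : ℝ × ℝ → ℝ := fun q => -(pdx u q * pdx u q) / 4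

noncomputable def Q0 (κ : ℝ) (u : ℝ × ℝ → ℝ) : ℝ × ℝ → ℝ := fun q =>
  2 * q.2 ^ 2 * pdx u q ^ 2 - κ / 2 * |Kcp q| * pdx u q ^ 2 + 2 * pdy u q ^ 2
    + 2 * (1 - κ) * q.2 * (pdx u q * pdy u q)

section Fprops

variable {u : ℝ × ℝ → ℝ}

lemma contDiff_FA (hu : ContDiff ℝ (⊤ : ℕ∞) u) (κ : ℝ) : ContDiff ℝ (⊤ : ℕ∞) (FA κ u) := by
  unfold FA
  exact ((contDiff_Kcp.mul (hu.mul (contDiff_pdx hu))).neg.add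
    (contDiff_const.mul (hu.mul hu))).sub
    (contDiff_const.mul (contDiff_snd.mul (contDiff_Kcp.mul
      ((contDiff_pdx hu).mul (contDiff_pdy hu)))))

lemma contDiff_FB (hu : ContDiff ℝ (⊤ : ℕ∞) u) : ContDiff ℝ (⊤ : ℕ∞) (FB u) := by
  unfold FB
  exact ((hu.mul (contDiff_pdy hu)).neg.add
    (contDiff_snd.mul (contDiff_Kcp.mul ((contDiff_pdx hu).mul (contDiff_pdx hu))))).sub
    (contDiff_snd.mul ((contDiff_pdy hu).mul (contDiff_pdy hu)))

lemma contDiff_FC (hu : ContDiff ℝ (⊤ : ℕ∞) u) : ContDiff ℝ (⊤ : ℕ∞) (FC u) := by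
  unfold FC
  exact ((contDiff_pdy hu).mul (contDiff_pdy hu)).div_const 4

lemma contDiff_FD (hu : ContDiff ℝ (⊤ : ℕ∞) u) : ContDiff ℝ (⊤ : ℕ∞) (FD u) := by
  unfold FD
  exact ((contDiff_pdx hu).mul (contDiff_pdy hu)).neg.div_const 2

lemma contDiff_FE (hu : ContDiff ℝ (⊤ : ℕ∞) u) : ContDiff ℝ (⊤ : ℕ∞) (FE u) := by
  unfold FE
  exact ((contDiff_pdx hu).mul (contDiff_pdx hu)).neg.div_const 4

/-! ### derivative expansions -/

lemma pdx_FA (hu : ContDiff ℝ (⊤ : ℕ∞) u) (κ : ℝ) (x y : ℝ) :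
    pdx (FA κ u) (x, y)
      = -(u (x, y) * pdx u (x, y)) - Kcp (x, y) * pdx u (x, y) ^ 2
          - Kcp (x, y) * (u (x, y) * pdx (pdx u) (x, y))
        + (1 - κ) * (u (x, y) * pdx u (x, y))
        - 2 * y * (pdx u (x, y) * pdy u (x, y))
        - 2 * y * Kcp (x, y) * (pdx (pdx u) (x, y) * pdy u (x, y))
        - 2 * y * Kcp (x, y) * (pdx u (x, y) * pdx (pdy u) (x, y)) := by
  have hU := hasDerivAt_sliceX hu x y
  have hX := hasDerivAt_sliceX (contDiff_pdx hu) x y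
  have hY := hasDerivAt_sliceX (contDiff_pdy hu) x y
  have hK : HasDerivAt (fun t : ℝ => Kcp (t, y)) 1 x := by
    simpa [Kcp] using (hasDerivAt_id x).sub_const (y ^ 2)
  have hbuilt := ((hK.mul (hU.mul hX)).neg.add ((hU.mul hU).const_mul ((1 - κ) / 2))).sub
    (((hK.mul (hX.mul hY)).const_mul y).const_mul 2)
  show deriv (fun t => FA κ u (t, y)) x = _
  rw [(show HasDerivAt (fun t => FA κ u (t, y)) _ x from hbuilt).deriv]
  simp only [Pi.mul_apply]
  try ring

lemma pdy_FB (hu : ContDiff ℝ (⊤ : ℕ∞) u) (x y : ℝ) :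
    pdy (FB u) (x, y)
      = -(pdy u (x, y) ^ 2) - u (x, y) * pdy (pdy u) (x, y)
        + Kcp (x, y) * pdx u (x, y) ^ 2 - 2 * y ^ 2 * pdx u (x, y) ^ 2
        + 2 * y * Kcp (x, y) * (pdx u (x, y) * pdy (pdx u) (x, y))
        - pdy u (x, y) ^ 2 - 2 * y * (pdy u (x, y) * pdy (pdy u) (x, y)) := by
  have hU := hasDerivAt_sliceY hu x y
  have hX := hasDerivAt_sliceY (contDiff_pdx hu) x y
  have hY := hasDerivAt_sliceY (contDiff_pdy hu) x y
  have hK : HasDerivAt (fun t : ℝ => Kcp (x, t)) (-(2 * y)) y := by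
    have := (hasDerivAt_pow 2 y).const_sub x
    simpa [Kcp] using this
  have hid : HasDerivAt (fun t : ℝ => t) 1 y := hasDerivAt_id y
  have hbuilt := ((hU.mul hY).neg.add (hid.mul (hK.mul (hX.mul hX)))).sub
    (hid.mul (hY.mul hY))
  show deriv (fun t => FB u (x, t)) y = _
  rw [(show HasDerivAt (fun t => FB u (x, t)) _ y from hbuilt).deriv]
  simp only [Pi.mul_apply]
  try ring

lemma pdx_FC (hu : ContDiff ℝ (⊤ : ℕ∞) u) (x y : ℝ) :
    pdx (FC u) (x, y) = pdy u (x, y) * pdx (pdy u) (x, y) / 2 := by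
  have hY := hasDerivAt_sliceX (contDiff_pdy hu) x y
  have hbuilt := (hY.mul hY).div_const 4
  show deriv (fun t => FC u (t, y)) x = _
  rw [(show HasDerivAt (fun t => FC u (t, y)) _ x from hbuilt).deriv]
  try ring

lemma pdy_FD (hu : ContDiff ℝ (⊤ : ℕ∞) u) (x y : ℝ) :
    pdy (FD u) (x, y)
      = -(pdy (pdx u) (x, y) * pdy u (x, y) + pdx u (x, y) * pdy (pdy u) (x, y)) / 2 := by
  have hX := hasDerivAt_sliceY (contDiff_pdx hu) x y
  have hY := hasDerivAt_sliceY (contDiff_pdy hu) x y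
  have hbuilt := (hX.mul hY).neg.div_const 2
  show deriv (fun t => FD u (x, t)) y = _
  rw [(show HasDerivAt (fun t => FD u (x, t)) _ y from hbuilt).deriv]
  try ring

lemma pdx_FE (hu : ContDiff ℝ (⊤ : ℕ∞) u) (x y : ℝ) :
    pdx (FE u) (x, y) = -(pdx u (x, y) * pdx (pdx u) (x, y)) / 2 := by
  have hX := hasDerivAt_sliceX (contDiff_pdx hu) x y
  have hbuilt := (hX.mul hX).neg.div_const 4
  show deriv (fun t => FE u (t, y)) x = _
  rw [(show HasDerivAt (fun t => FE u (t, y)) _ x from hbuilt).deriv]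
  try ring

/-- The master pointwise identity. -/
lemma master_identity (hu : ContDiff ℝ (⊤ : ℕ∞) u) (κ : ℝ) (p : ℝ × ℝ) :
    MMultN (1 / 2) u p * Lop κ u p
      = pdx (FA κ u) p + (pdy (FB u) p + (|Kcp p| * pdx (FC u) p
        + (|Kcp p| * pdy (FD u) p + ((Kcp p * |Kcp p|) * pdx (FE u) p + Q0 κ u p)))) := by
  obtain ⟨x, y⟩ := p
  rw [pdx_FA hu κ x y, pdy_FB hu x y, pdx_FC hu x y, pdy_FD hu x y, pdx_FE hu x y,
    mixed_symm hu (x, y)]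
  simp only [MMultN, Lop, Q0]
  ring

end Fprops


end CPaux

open CPaux

set_option maxHeartbeats 2000000 in
/-- The lower estimate (Mu, Lu) ≥ C‖u‖²_{H¹₀(Ω;𝒦)} from the proof of
Lemma 3.1, case 0 ≤ κ < 1. -/
theorem lower_estimate_kappa_lt_one (Ω : Set (ℝ × ℝ)) (hΩo : IsOpen Ω)
    (hΩb : Bornology.IsBounded Ω)
    (κ : ℝ) (hκ : κ ∈ Set.Ico (0 : ℝ) 1) :
    ∃ N : ℝ, 1 / (3 - κ) < N ∧ N < 1 / (κ + 1) ∧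
      ∃ C > (0 : ℝ),
        ∀ u : ℝ × ℝ → ℝ, ContDiff ℝ (⊤ : ℕ∞) u → HasCompactSupport u → tsupport u ⊆ Ω →
          (∫ p in Ω, MMultN N u p * Lop κ u p) ≥
            C * ∫ p in Ω, (|Kcp p| * (pdx u p) ^ 2 + (pdy u p) ^ 2) := by
  obtain ⟨hκ0, hκ1⟩ := hκ
  refine ⟨1 / 2, ?_, ?_, (1 - κ) / 2, by linarith, ?_⟩
  · rw [div_lt_div_iff₀ (by linarith) (by norm_num)]; linarith
  · rw [div_lt_div_iff₀ (by norm_num) (by linarith)]; linarith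
  intro u hu hcs hsub
  have cU := hu.continuous
  have cX := (contDiff_pdx hu).continuous
  have cY := (contDiff_pdy hu).continuous
  have cXX := (contDiff_pdx (contDiff_pdx hu)).continuous
  have cYY := (contDiff_pdy (contDiff_pdy hu)).continuous
  have cK := continuous_Kcp
  have cKa : Continuous fun p : ℝ × ℝ => |Kcp p| := cK.abs
  have cML : Continuous fun p => MMultN (1 / 2) u p * Lop κ u p := by
    unfold MMultN Lop; fun_prop
  have cRHS : Continuous fun p : ℝ × ℝ => |Kcp p| * pdx u p ^ 2 + pdy u p ^ 2 := by fun_prop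
  -- reduction to integrals over ℝ²
  have hvan : ∀ p, p ∉ Ω → u p = 0 ∧ pdx u p = 0 ∧ pdy u p = 0 := fun p hp =>
    zero_of_nmem (fun h => hp (hsub h))
  have hsetL : ∫ p in Ω, MMultN (1 / 2) u p * Lop κ u p
      = ∫ p, MMultN (1 / 2) u p * Lop κ u p := by
    apply setIntegral_eq_integral_of_forall_compl_eq_zero
    intro p hp
    obtain ⟨h1, h2, h3⟩ := hvan p hp
    simp [MMultN, h1, h2, h3]
  have hsetR : ∫ p in Ω, (|Kcp p| * pdx u p ^ 2 + pdy u p ^ 2)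
      = ∫ p, (|Kcp p| * pdx u p ^ 2 + pdy u p ^ 2) := by
    apply setIntegral_eq_integral_of_forall_compl_eq_zero
    intro p hp
    obtain ⟨h1, h2, h3⟩ := hvan p hp
    simp [h2, h3]
  rw [ge_iff_le, hsetL, hsetR]
  -- compact supports
  have hcsFA : HasCompactSupport (FA κ u) :=
    hcs_of_usupp hcs (fun p h1 h2 h3 => by simp [FA, h1, h2, h3])
  have hcsFB : HasCompactSupport (FB u) :=
    hcs_of_usupp hcs (fun p h1 h2 h3 => by simp [FB, h1, h2, h3])
  have hcsFC : HasCompactSupport (FC u) :=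
    hcs_of_usupp hcs (fun p h1 h2 h3 => by simp [FC, h1, h2, h3])
  have hcsFD : HasCompactSupport (FD u) :=
    hcs_of_usupp hcs (fun p h1 h2 h3 => by simp [FD, h1, h2, h3])
  have hcsFE : HasCompactSupport (FE u) :=
    hcs_of_usupp hcs (fun p h1 h2 h3 => by simp [FE, h1, h2, h3])
  have hcsQ0 : HasCompactSupport (Q0 κ u) :=
    hcs_of_usupp hcs (fun p h1 h2 h3 => by simp [Q0, h2, h3])
  -- integrabilities
  have i1 : Integrable (pdx (FA κ u)) :=
    integ_cc (contDiff_pdx (contDiff_FA hu κ)).continuous (hcs_pdx hcsFA)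
  have i2 : Integrable (pdy (FB u)) :=
    integ_cc (contDiff_pdy (contDiff_FB hu)).continuous (hcs_pdy hcsFB)
  have i3 : Integrable fun p => |Kcp p| * pdx (FC u) p :=
    integ_cc (cKa.mul (contDiff_pdx (contDiff_FC hu)).continuous) (hcs_mul (hcs_pdx hcsFC))
  have i4 : Integrable fun p => |Kcp p| * pdy (FD u) p :=
    integ_cc (cKa.mul (contDiff_pdy (contDiff_FD hu)).continuous) (hcs_mul (hcs_pdy hcsFD))
  have i5 : Integrable fun p => (Kcp p * |Kcp p|) * pdx (FE u) p :=
    integ_cc ((cK.mul cKa).mul (contDiff_pdx (contDiff_FE hu)).continuous)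
      (hcs_mul (hcs_pdx hcsFE))
  have i6 : Integrable (Q0 κ u) :=
    integ_cc (by unfold Q0; fun_prop) hcsQ0
  have iSgC : Integrable fun p => Sg p * FC u p :=
    (integ_cc ((contDiff_FC hu).continuous) hcsFC).bdd_mul
      measurable_Sg.aestronglyMeasurable (c := 1) (Eventually.of_forall abs_Sg_le)
  have iSgD : Integrable fun p => Sg p * (2 * p.2 * FD u p) := by
    refine Integrable.bdd_mul ?_ measurable_Sg.aestronglyMeasurable (c := 1) (Eventually.of_forall abs_Sg_le)
    exact integ_cc ((continuous_const.mul continuous_snd).mul (contDiff_FD hu).continuous)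
      (hcs_mul hcsFD)
  have iKE : Integrable fun p => (2 * |Kcp p|) * FE u p :=
    integ_cc ((continuous_const.mul cKa).mul (contDiff_FE hu).continuous) (hcs_mul hcsFE)
  -- master identity
  have hrw : (fun p => MMultN (1 / 2) u p * Lop κ u p) = fun p =>
      pdx (FA κ u) p + (pdy (FB u) p + (|Kcp p| * pdx (FC u) p
        + (|Kcp p| * pdy (FD u) p + ((Kcp p * |Kcp p|) * pdx (FE u) p + Q0 κ u p)))) :=
    funext (master_identity hu κ)
  rw [hrw]
  have h1 := integral_add i1 (i2.add (i3.add (i4.add (i5.add i6))))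
  have h2 := integral_add i2 (i3.add (i4.add (i5.add i6)))
  have h3 := integral_add i3 (i4.add (i5.add i6))
  have h4 := integral_add i4 (i5.add i6)
  have h5 := integral_add i5 i6
  simp only [Pi.add_apply] at h1 h2 h3 h4 h5
  rw [h1, h2, h3, h4, h5]
  rw [ibp_x (contDiff_FA hu κ) hcsFA, ibp_y (contDiff_FB hu) hcsFB,
    ibp_absK_x (contDiff_FC hu) hcsFC, ibp_absK_y (contDiff_FD hu) hcsFD,
    ibp_KabsK_x (contDiff_FE hu) hcsFE]
  simp only [zero_add]
  have g1 := integral_add iSgC.neg (iSgD.add (iKE.neg.add i6))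
  have g2 := integral_add iSgD (iKE.neg.add i6)
  have g3 := integral_add iKE.neg i6
  simp only [Pi.add_apply, Pi.neg_apply] at g1 g2 g3
  rw [← integral_neg, ← integral_neg, ← g3, ← g2, ← g1]
  rw [← integral_const_mul]
  refine integral_mono ((integ_cc cRHS (hcs_of_usupp hcs (fun p h1 h2 h3 => by
      simp [h2, h3]))).const_mul _)
    (iSgC.neg.add (iSgD.add (iKE.neg.add i6))) (fun p => ?_)
  simp only [FC, FD, FE, Q0, Pi.add_apply, Pi.neg_apply]
  rcases Sg_cases p with h | h <;> rw [h] <;>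
    nlinarith [sq_nonneg (4 * (p.2 * pdx u p) + (1 - 2 * κ) * pdy u p),
      sq_nonneg (4 * (p.2 * pdx u p) + (3 - 2 * κ) * pdy u p),
      sq_nonneg (pdy u p), mul_nonneg hκ0 (by linarith : (0:ℝ) ≤ 1 - κ),
      mul_nonneg (mul_nonneg hκ0 (by linarith : (0:ℝ) ≤ 1 - κ)) (sq_nonneg (pdy u p)),
      mul_nonneg hκ0 (sq_nonneg (pdy u p))]
end

section
/- Let κ ∈ [1,2], δ ∈ (0, 1/4], μ₁ > 0, and Q₁ = exp(2δμ₁). Let K be a real number with 0 < K ≤ μ₁, let y ∈ ℝ, and set b = exp(2δK/Q₁), α = (2 − b/Q₁)δK + 2(1 − 2δ)y² + (κ − 1/2)b, β = y(2δ b/Q₁ + (κ − 1)(2δ − 1)), and γ = 2(1 − δ) + δ b/Q₁. Then for all real ξ and η, αξ² + 2βξη + γη² ≥ δ(Kξ² + η²). -/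
/-- Pointwise positivity of the quadratic form on the elliptic region Ω⁺
in the proof of Lemma 3.1: αξ² + 2βξη + γη² ≥ δ(Kξ² + η²). -/
theorem quadratic_form_positive_elliptic (κ δ μ₁ K y : ℝ)
    (hκ : κ ∈ Set.Icc (1 : ℝ) 2) (hδ : δ ∈ Set.Ioc (0 : ℝ) (1 / 4))
    (hμ₁ : 0 < μ₁) (hK : 0 < K) (hKμ : K ≤ μ₁) :
    ∀ ξ η : ℝ,
      ((2 - Real.exp (2 * δ * K / Real.exp (2 * δ * μ₁)) / Real.exp (2 * δ * μ₁)) * δ * K +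
            2 * (1 - 2 * δ) * y ^ 2 +
            (κ - 1 / 2) * Real.exp (2 * δ * K / Real.exp (2 * δ * μ₁))) * ξ ^ 2 +
        2 * (y * (2 * δ * Real.exp (2 * δ * K / Real.exp (2 * δ * μ₁)) / Real.exp (2 * δ * μ₁) +
            (κ - 1) * (2 * δ - 1))) * ξ * η +
        (2 * (1 - δ) + δ * Real.exp (2 * δ * K / Real.exp (2 * δ * μ₁)) / Real.exp (2 * δ * μ₁)) *
          η ^ 2 ≥
      δ * (K * ξ ^ 2 + η ^ 2) := by
  obtain ⟨hκ1, hκ2⟩ := hκ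
  obtain ⟨hδ0, hδ4⟩ := hδ
  intro ξ η
  set Q := Real.exp (2 * δ * μ₁) with hQdef
  set b := Real.exp (2 * δ * K / Q) with hbdef
  have hQpos : 0 < Q := Real.exp_pos _
  have hQ1 : 1 ≤ Q := Real.one_le_exp (by positivity)
  have hbpos : 0 < b := Real.exp_pos _
  have hb1 : 1 ≤ b := Real.one_le_exp (by positivity)
  have hbQ : b ≤ Q := by
    rw [hbdef, hQdef]
    exact Real.exp_le_exp.mpr (by
      rw [div_le_iff₀ hQpos]
      nlinarith [le_mul_of_one_le_right hμ₁.le hQ1, hδ0.le])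
  have ht1 : b / Q ≤ 1 := (div_le_one hQpos).mpr hbQ
  have ht0 : 0 < b / Q := div_pos hbpos hQpos
  have hm : 2 * δ * b / Q = 2 * δ * (b / Q) := by ring
  have h1p : 0 ≤ 1 + (2 * δ * (b / Q) + (κ - 1) * (2 * δ - 1)) := by nlinarith
  have h1m : 0 ≤ 1 - (2 * δ * (b / Q) + (κ - 1) * (2 * δ - 1)) := by nlinarith
  have h3 : 0 ≤ (1 - b / Q) * (δ * K) * ξ ^ 2 := by
    apply mul_nonneg (mul_nonneg (by linarith) (by positivity)) (sq_nonneg ξ)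
  have h4 : (1 : ℝ) / 2 ≤ (κ - 1 / 2) * b := by nlinarith
  have h14 : 0 ≤ (1 - 4 * δ) * y ^ 2 * ξ ^ 2 :=
    mul_nonneg (mul_nonneg (by linarith) (sq_nonneg y)) (sq_nonneg ξ)
  have e1 : δ * b / Q = δ * (b / Q) := by ring
  rw [hm, e1]
  nlinarith [mul_nonneg h1p (sq_nonneg (y * ξ + η)), mul_nonneg h1m (sq_nonneg (y * ξ - η)),
    sq_nonneg ξ, sq_nonneg η, mul_nonneg (by linarith : (0:ℝ) ≤ (κ - 1/2) * b) (sq_nonneg ξ), h3, h14,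
    mul_nonneg (mul_nonneg hδ0.le ht0.le) (sq_nonneg η),
    mul_nonneg hδ0.le (sq_nonneg η)]
end

section
/- Let κ ∈ [1,2], μ₂ < 0, Q₂ = exp(μ₂), and let δ satisfy 0 < δ ≤ min(1/4, Q₂/6). Let K be a real number with μ₂ ≤ K < 0, let y ∈ ℝ, and set b = exp(6δK/Q₂), α = (3b/Q₂ − 2)δ|K| + 2(1 − 2δ)y² + (κ − 1/2)b, β = y(6δ b/Q₂ + (κ − 1)(2δ − 1)), and γ = 2(1 − δ) + 3δ b/Q₂. Then for all real ξ and η, αξ² + 2βξη + γη² ≥ δ(|K|ξ² + η²). -/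
lemma quad_aux (κ δ r M b y ξ η : ℝ)
    (hκ1 : 1 ≤ κ) (hκ2 : κ ≤ 2) (hδpos : 0 < δ) (hδ4 : δ ≤ 1 / 4)
    (hr1 : 1 ≤ r) (hr6 : 6 * δ * r ≤ 1) (hb : 0 < b) (hM : 0 ≤ M) :
    ((3 * r - 2) * δ * M + 2 * (1 - 2 * δ) * y ^ 2 + (κ - 1 / 2) * b) * ξ ^ 2 +
      2 * (y * (6 * δ * r + (κ - 1) * (2 * δ - 1))) * ξ * η +
      (2 * (1 - δ) + 3 * δ * r) * η ^ 2 ≥ δ * (M * ξ ^ 2 + η ^ 2) := by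
  obtain ⟨S, hS⟩ : ∃ S, S = 6 * δ * r + (κ - 1) * (2 * δ - 1) := ⟨_, rfl⟩
  rw [show 6 * δ * r + (κ - 1) * (2 * δ - 1) = S from hS.symm]
  have hrδ : 0 ≤ 6 * δ * r := by positivity
  have hSlow : -1 ≤ S := by
    rw [hS]; nlinarith [mul_nonneg (by linarith : (0:ℝ) ≤ κ - 1) (by linarith : (0:ℝ) ≤ 1 - 2*δ)]
  have hShigh : S ≤ 1 := by
    rw [hS]; nlinarith [mul_nonneg (by linarith : (0:ℝ) ≤ κ - 1) (by linarith : (0:ℝ) ≤ 1 - 2*δ)]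
  have hS2 : S ^ 2 ≤ 1 := by nlinarith
  have hstep : 2 * S * y * ξ * η ≥ -(y ^ 2 * ξ ^ 2 + η ^ 2) := by
    nlinarith [sq_nonneg (S * y * ξ + η),
      mul_nonneg (by linarith : (0:ℝ) ≤ 1 - S ^ 2) (sq_nonneg (y * ξ))]
  nlinarith [hstep,
    mul_nonneg (mul_nonneg (mul_nonneg hδpos.le hM) (by linarith : (0:ℝ) ≤ r - 1)) (sq_nonneg ξ),
    mul_nonneg (mul_nonneg hδpos.le (by linarith : (0:ℝ) ≤ r - 1)) (sq_nonneg η),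
    mul_nonneg (mul_nonneg (by linarith : (0:ℝ) ≤ κ - 1/2) hb.le) (sq_nonneg ξ),
    mul_nonneg (by linarith : (0:ℝ) ≤ 1 - 4*δ) (mul_nonneg (sq_nonneg y) (sq_nonneg ξ)),
    mul_nonneg (by linarith : (0:ℝ) ≤ 1 - 2*δ) (sq_nonneg η),
    sq_nonneg ξ, sq_nonneg η, sq_nonneg (y*ξ)]

/-- Pointwise positivity of the quadratic form on the hyperbolic region Ω⁻
in the proof of Lemma 3.1: αξ² + 2βξη + γη² ≥ δ(|K|ξ² + η²). -/
theorem quadratic_form_positive_hyperbolic (κ δ μ₂ K y : ℝ)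
    (hκ : κ ∈ Set.Icc (1 : ℝ) 2) (hμ₂ : μ₂ < 0)
    (hδpos : 0 < δ) (hδ : δ ≤ min (1 / 4) (Real.exp μ₂ / 6))
    (hKlow : μ₂ ≤ K) (hK : K < 0) :
    ∀ ξ η : ℝ,
      ((3 * Real.exp (6 * δ * K / Real.exp μ₂) / Real.exp μ₂ - 2) * δ * |K| +
            2 * (1 - 2 * δ) * y ^ 2 +
            (κ - 1 / 2) * Real.exp (6 * δ * K / Real.exp μ₂)) * ξ ^ 2 +
        2 * (y * (6 * δ * Real.exp (6 * δ * K / Real.exp μ₂) / Real.exp μ₂ +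
            (κ - 1) * (2 * δ - 1))) * ξ * η +
        (2 * (1 - δ) + 3 * δ * Real.exp (6 * δ * K / Real.exp μ₂) / Real.exp μ₂) * η ^ 2 ≥
      δ * (|K| * ξ ^ 2 + η ^ 2) := by
  obtain ⟨hκ1, hκ2⟩ := hκ
  have hδ4 : δ ≤ 1 / 4 := le_trans hδ (min_le_left _ _)
  have hQpos : (0:ℝ) < Real.exp μ₂ := Real.exp_pos _
  have hδQ : 6 * δ ≤ Real.exp μ₂ := by
    have := le_trans hδ (min_le_right _ _); linarith
  have habs : |K| = -K := abs_of_neg hK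
  set Q := Real.exp μ₂ with hQdef
  set b := Real.exp (6 * δ * K / Q) with hbdef
  have hbpos : 0 < b := Real.exp_pos _
  have hb1 : b ≤ 1 := by
    rw [hbdef, Real.exp_le_one_iff]
    apply div_nonpos_of_nonpos_of_nonneg _ hQpos.le
    nlinarith
  have hQb : Q ≤ b := by
    rw [hQdef, hbdef]
    apply Real.exp_le_exp.mpr
    rw [le_div_iff₀ hQpos]
    nlinarith
  intro ξ η
  rw [habs]
  have hr1 : 1 ≤ b / Q := (le_div_iff₀ hQpos).mpr (by linarith)
  have hr6 : 6 * δ * (b / Q) ≤ 1 := by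
    rw [mul_div_assoc'] at *
    rw [div_le_one hQpos]; nlinarith
  have := quad_aux κ δ (b / Q) (-K) b y ξ η hκ1 hκ2 hδpos hδ4 hr1 hr6 hbpos (by linarith)
  linear_combination this
end
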